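/- arXiv:2201.09171 — 8 statements merged into one kernel-verified Lean document; each statement's English description precedes it below -/
import Mathlib

section
/- For all positive integers v, k, t with k ≥ t + 1 and v ≥ k + t + 1, there exists a (v,k,t) trade of volume 2^t. -/
/-- A `(v,k,t)` trade: a pair of disjoint families of `k`-element subsets (blocks)
of `{1,…,v}` of equal cardinality `≥ 1`, such that every `t`-element subset of
`{1,…,v}` is contained in the same number of blocks of each family. -/
def IsTrade (v k t : ℕ) (T1 T2 : Finset (Finset ℕ)) : Prop :=
  (∀ B ∈ T1, B ⊆ Finset.Icc 1 v ∧ B.card = k) ∧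
  (∀ B ∈ T2, B ⊆ Finset.Icc 1 v ∧ B.card = k) ∧
  Disjoint T1 T2 ∧
  T1.card = T2.card ∧
  1 ≤ T1.card ∧
  ∀ U ⊆ Finset.Icc 1 v, U.card = t →
    (T1.filter fun B => U ⊆ B).card = (T2.filter fun B => U ⊆ B).card

open Finset

/-- point selected from pair `i`: `2i+1` if `i ∈ S`, else `2i+2`. -/
def pt (S : Finset ℕ) (i : ℕ) : ℕ := if i ∈ S then 2*i+1 else 2*i+2

/-- the block associated to a choice set `S ⊆ range (t+1)`. -/
def blk (k t : ℕ) (S : Finset ℕ) : Finset ℕ :=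
  ((Finset.range (t+1)).image (pt S)) ∪ Finset.Icc (2*t+3) (k+t+1)

/-- toggle membership of `i0`. -/
def tog (i0 : ℕ) (S : Finset ℕ) : Finset ℕ :=
  if i0 ∈ S then S.erase i0 else insert i0 S

lemma tog_tog (i0 : ℕ) (S : Finset ℕ) : tog i0 (tog i0 S) = S := by
  unfold tog
  by_cases h : i0 ∈ S
  · simp [h, Finset.insert_erase h]
  · simp [h, Finset.erase_insert h]

lemma tog_mem {i0 j : ℕ} (S : Finset ℕ) (h : j ≠ i0) : j ∈ tog i0 S ↔ j ∈ S := by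
  unfold tog
  split <;> simp [h]

lemma tog_parity (i0 : ℕ) (S : Finset ℕ) : Even ((tog i0 S).card) ↔ ¬ Even S.card := by
  unfold tog
  split
  · rename_i h
    have := Finset.card_erase_add_one h
    have h2 : S.card = (S.erase i0).card + 1 := by omega
    rw [h2, Nat.even_add_one]
    tauto
  · rename_i h
    rw [Finset.card_insert_of_notMem h, Nat.even_add_one]

lemma tog_subset {i0 n : ℕ} {S : Finset ℕ} (hS : S ⊆ Finset.range n)
    (hi : i0 ∈ Finset.range n) : tog i0 S ⊆ Finset.range n := by
  unfold tog
  split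
  · exact (Finset.erase_subset _ _).trans hS
  · exact Finset.insert_subset hi hS

/-- count of even-card members equals count of odd-card members in a family
closed under toggling `i0`. -/
lemma card_even_eq_odd (A : Finset (Finset ℕ)) (i0 : ℕ)
    (hA : ∀ S ∈ A, tog i0 S ∈ A) :
    (A.filter fun S => Even S.card).card = (A.filter fun S => ¬ Even S.card).card := by
  apply Finset.card_bij' (fun S _ => tog i0 S) (fun S _ => tog i0 S)
  · intro S hS
    simp only [Finset.mem_filter] at hS ⊢
    exact ⟨hA S hS.1, by rw [tog_parity]; tauto⟩
  · intro S hS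
    simp only [Finset.mem_filter] at hS ⊢
    refine ⟨hA S hS.1, ?_⟩
    rw [tog_parity]
    tauto
  · intro S _; exact tog_tog i0 S
  · intro S _; exact tog_tog i0 S

lemma pt_mem_pair (S : Finset ℕ) (i : ℕ) : pt S i = 2*i+1 ∨ pt S i = 2*i+2 := by
  unfold pt; split <;> simp

lemma mem_blk {k t x : ℕ} {S : Finset ℕ} :
    x ∈ blk k t S ↔ (∃ i < t+1, pt S i = x) ∨ (2*t+3 ≤ x ∧ x ≤ k+t+1) := by
  simp [blk, Finset.mem_union, Finset.mem_image, Finset.mem_range, Finset.mem_Icc]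

lemma odd_mem_blk {k t i : ℕ} {S : Finset ℕ} (h : i < t+1) :
    2*i+1 ∈ blk k t S ↔ i ∈ S := by
  rw [mem_blk]
  constructor
  · rintro (⟨j, hj, hpt⟩ | ⟨h1, _⟩)
    · unfold pt at hpt
      split at hpt
      · rename_i hm
        have : j = i := by omega
        exact this ▸ hm
      · omega
    · omega
  · intro hi
    exact Or.inl ⟨i, h, by simp [pt, hi]⟩

lemma even_mem_blk {k t i : ℕ} {S : Finset ℕ} (h : i < t+1) :
    2*i+2 ∈ blk k t S ↔ i ∉ S := by
  rw [mem_blk]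
  constructor
  · rintro (⟨j, hj, hpt⟩ | ⟨h1, _⟩)
    · unfold pt at hpt
      split at hpt
      · omega
      · rename_i hm
        have : j = i := by omega
        exact this ▸ hm
    · omega
  · intro hi
    exact Or.inl ⟨i, h, by simp [pt, hi]⟩

lemma blk_injOn {k t : ℕ} {S₁ S₂ : Finset ℕ} (h1 : S₁ ⊆ Finset.range (t+1))
    (h2 : S₂ ⊆ Finset.range (t+1)) (he : blk k t S₁ = blk k t S₂) : S₁ = S₂ := by
  ext i
  by_cases hi : i < t+1
  · rw [← odd_mem_blk (k := k) hi, ← odd_mem_blk (k := k) (S := S₂) hi, he]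
  · constructor <;> intro hm
    · exact absurd (Finset.mem_range.1 (h1 hm)) hi
    · exact absurd (Finset.mem_range.1 (h2 hm)) hi

lemma blk_card {k t : ℕ} (hkt : k ≥ t+1) (S : Finset ℕ) : (blk k t S).card = k := by
  unfold blk
  rw [Finset.card_union_of_disjoint]
  · rw [Finset.card_image_of_injOn, Finset.card_range, Nat.card_Icc]
    · omega
    · intro a ha b hb hab
      unfold pt at hab
      split at hab <;> split at hab <;> omega
  · rw [Finset.disjoint_left]
    intro x hx hx2
    simp only [Finset.mem_image, Finset.mem_range] at hx
    obtain ⟨i, hi, hpt⟩ := hx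
    rw [Finset.mem_Icc] at hx2
    rcases pt_mem_pair S i with h | h <;> omega

lemma blk_subset {v k t : ℕ} (hkt : k ≥ t+1) (hvk : v ≥ k+t+1) (S : Finset ℕ) :
    blk k t S ⊆ Finset.Icc 1 v := by
  intro x hx
  rw [mem_blk] at hx
  rw [Finset.mem_Icc]
  rcases hx with ⟨i, hi, hpt⟩ | ⟨h1, h2⟩
  · rcases pt_mem_pair S i with h | h <;> omega
  · omega

lemma blk_tog {k t i0 x : ℕ} {S : Finset ℕ} (hx1 : x ≠ 2*i0+1) (hx2 : x ≠ 2*i0+2) :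
    x ∈ blk k t (tog i0 S) ↔ x ∈ blk k t S := by
  rw [mem_blk, mem_blk]
  have key : ∀ j < t+1, (pt (tog i0 S) j = x ↔ pt S j = x) := by
    intro j hj
    by_cases hji : j = i0
    · subst hji
      constructor <;> intro h
      · rcases pt_mem_pair (tog j S) j with h' | h' <;> omega
      · rcases pt_mem_pair S j with h' | h' <;> omega
    · have : pt (tog i0 S) j = pt S j := by
        unfold pt
        rw [if_congr (tog_mem S hji) rfl rfl]
      rw [this]
  constructor
  · rintro (⟨j, hj, hpt⟩ | h)
    · exact Or.inl ⟨j, hj, (key j hj).1 hpt⟩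
    · exact Or.inr h
  · rintro (⟨j, hj, hpt⟩ | h)
    · exact Or.inl ⟨j, hj, (key j hj).2 hpt⟩
    · exact Or.inr h

lemma exists_free_pair (U : Finset ℕ) (t : ℕ) (hU : U.card = t) :
    ∃ i < t+1, 2*i+1 ∉ U ∧ 2*i+2 ∉ U := by
  by_contra h
  push_neg at h
  have hsub : Finset.range (t+1) ⊆ U.image (fun x => (x-1)/2) := by
    intro i hi
    rw [Finset.mem_range] at hi
    rcases Classical.em (2*i+1 ∈ U) with h1 | h1
    · exact Finset.mem_image.2 ⟨2*i+1, h1, by omega⟩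
    · exact Finset.mem_image.2 ⟨2*i+2, h i hi h1, by omega⟩
  have h2 := (Finset.card_le_card hsub).trans Finset.card_image_le
  rw [Finset.card_range, hU] at h2
  omega

/-- For all positive integers `v, k, t` with `k ≥ t + 1` and `v ≥ k + t + 1`,
there exists a `(v,k,t)` trade of volume `2^t`. -/
theorem exists_trade_of_volume_two_pow (v k t : ℕ)
    (hv : 0 < v) (hk : 0 < k) (ht : 0 < t)
    (hkt : k ≥ t + 1) (hvk : v ≥ k + t + 1) :
    ∃ T1 T2 : Finset (Finset ℕ), IsTrade v k t T1 T2 ∧ T1.card = 2 ^ t := by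
  classical
  set A : Finset (Finset ℕ) := (Finset.range (t+1)).powerset with hA
  set E : Finset (Finset ℕ) := A.filter (fun S => Even S.card) with hE
  set O : Finset (Finset ℕ) := A.filter (fun S => ¬ Even S.card) with hO
  have hEsub : ∀ S ∈ E, S ⊆ Finset.range (t+1) := fun S hS =>
    Finset.mem_powerset.1 (Finset.mem_filter.1 hS).1
  have hOsub : ∀ S ∈ O, S ⊆ Finset.range (t+1) := fun S hS =>
    Finset.mem_powerset.1 (Finset.mem_filter.1 hS).1
  have hAclosed : ∀ S ∈ A, tog t S ∈ A := by
    intro S hS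
    rw [hA, Finset.mem_powerset] at hS ⊢
    exact tog_subset hS (Finset.mem_range.2 (by omega))
  -- cardinality of E and O
  have hEO : E.card = O.card := card_even_eq_odd A t hAclosed
  have hsum : E.card + O.card = 2^(t+1) := by
    rw [hE, hO, Finset.card_filter_add_card_filter_not, hA,
      Finset.card_powerset, Finset.card_range]
  have hEcard : E.card = 2^t := by
    have : 2^(t+1) = 2^t + 2^t := by ring
    omega
  -- injectivity on E ∪ O
  have hinjE : Set.InjOn (blk k t) ↑E := by
    intro S₁ h1 S₂ h2 he
    exact blk_injOn (hEsub S₁ h1) (hEsub S₂ h2) he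
  have hinjO : Set.InjOn (blk k t) ↑O := by
    intro S₁ h1 S₂ h2 he
    exact blk_injOn (hOsub S₁ h1) (hOsub S₂ h2) he
  refine ⟨E.image (blk k t), O.image (blk k t), ⟨?_, ?_, ?_, ?_, ?_, ?_⟩, ?_⟩
  · rintro B hB
    obtain ⟨S, hS, rfl⟩ := Finset.mem_image.1 hB
    exact ⟨blk_subset hkt hvk S, blk_card hkt S⟩
  · rintro B hB
    obtain ⟨S, hS, rfl⟩ := Finset.mem_image.1 hB
    exact ⟨blk_subset hkt hvk S, blk_card hkt S⟩
  · rw [Finset.disjoint_left]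
    rintro B hB hB'
    obtain ⟨S₁, hS1, rfl⟩ := Finset.mem_image.1 hB
    obtain ⟨S₂, hS2, he⟩ := Finset.mem_image.1 hB'
    have : S₂ = S₁ := blk_injOn (hOsub S₂ hS2) (hEsub S₁ hS1) he
    subst this
    have e1 := (Finset.mem_filter.1 hS1).2
    have e2 := (Finset.mem_filter.1 hS2).2
    exact e2 e1
  · rw [Finset.card_image_of_injOn hinjE, Finset.card_image_of_injOn hinjO, hEO]
  · rw [Finset.card_image_of_injOn hinjE, hEcard]
    exact Nat.one_le_two_pow
  · intro U hUsub hUcard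
    obtain ⟨i0, hi0, hu1, hu2⟩ := exists_free_pair U t hUcard
    -- blocks containing U: count via choice sets
    rw [Finset.filter_image, Finset.filter_image,
      Finset.card_image_of_injOn (hinjE.mono (Finset.coe_subset.2 (Finset.filter_subset _ _))),
      Finset.card_image_of_injOn (hinjO.mono (Finset.coe_subset.2 (Finset.filter_subset _ _)))]
    rw [hE, hO, Finset.filter_filter, Finset.filter_filter]
    have hcomm1 : (A.filter fun S => Even S.card ∧ U ⊆ blk k t S)
        = (A.filter fun S => U ⊆ blk k t S).filter (fun S => Even S.card) := by
      rw [Finset.filter_filter]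
      apply Finset.filter_congr
      intro S _
      tauto
    have hcomm2 : (A.filter fun S => ¬ Even S.card ∧ U ⊆ blk k t S)
        = (A.filter fun S => U ⊆ blk k t S).filter (fun S => ¬ Even S.card) := by
      rw [Finset.filter_filter]
      apply Finset.filter_congr
      intro S _
      tauto
    rw [hcomm1, hcomm2]
    apply card_even_eq_odd
    intro S hS
    rw [Finset.mem_filter] at hS ⊢
    refine ⟨?_, ?_⟩
    · rw [Finset.mem_powerset] at hS ⊢
      exact tog_subset hS.1 (Finset.mem_range.2 hi0)
    · intro x hx
      have hx1 : x ≠ 2*i0+1 := fun h => hu1 (h ▸ hx)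
      have hx2 : x ≠ 2*i0+2 := fun h => hu2 (h ▸ hx)
      exact (blk_tog hx1 hx2).2 (hS.2 hx)
  · rw [Finset.card_image_of_injOn hinjE, hEcard]
end

section
/- For all positive integers v, k, t with t < k < v, every (v,k,t) trade has volume at least 2^t; that is, 2^t is the minimum possible volume of a (v,k,t) trade. -/
/-- A `(v,k,t)` trade: a pair of disjoint families of `k`-element subsets (blocks)
of `{1,…,v}` of equal cardinality `≥ 1`, such that every `t`-element subset of
`{1,…,v}` is contained in the same number of blocks of each family. -/

lemma counts_down (v k t : ℕ) (T1 T2 : Finset (Finset ℕ))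
    (hT1 : ∀ B ∈ T1, B ⊆ Finset.Icc 1 v ∧ B.card = k)
    (hT2 : ∀ B ∈ T2, B ⊆ Finset.Icc 1 v ∧ B.card = k)
    (htk : t + 1 ≤ k)
    (h : ∀ U ⊆ Finset.Icc 1 v, U.card = t + 1 →
      (T1.filter fun B => U ⊆ B).card = (T2.filter fun B => U ⊆ B).card) :
    ∀ U ⊆ Finset.Icc 1 v, U.card = t →
      (T1.filter fun B => U ⊆ B).card = (T2.filter fun B => U ⊆ B).card := by
  intro U hU hUc
  have key : ∀ T : Finset (Finset ℕ), (∀ B ∈ T, B ⊆ Finset.Icc 1 v ∧ B.card = k) →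
      ∑ x ∈ Finset.Icc 1 v \ U, (T.filter fun B => insert x U ⊆ B).card
        = (k - t) * (T.filter fun B => U ⊆ B).card := by
    intro T hT
    have : ∀ x ∈ Finset.Icc 1 v \ U, (T.filter fun B => insert x U ⊆ B).card
        = ∑ B ∈ T, if insert x U ⊆ B then 1 else 0 := by
      intro x _; rw [Finset.card_filter]
    rw [Finset.sum_congr rfl this, Finset.sum_comm]
    rw [Finset.card_filter, Finset.mul_sum]
    refine Finset.sum_congr rfl ?_
    intro B hB
    rw [← Finset.card_filter]
    by_cases hUB : U ⊆ B
    · have hfe : (Finset.Icc 1 v \ U).filter (fun x => insert x U ⊆ B) = B \ U := by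
        ext x
        simp only [Finset.mem_filter, Finset.mem_sdiff, Finset.insert_subset_iff]
        constructor
        · rintro ⟨⟨_, hxU⟩, hxB, _⟩; exact ⟨hxB, hxU⟩
        · rintro ⟨hxB, hxU⟩; exact ⟨⟨(hT B hB).1 hxB, hxU⟩, hxB, hUB⟩
      rw [hfe, Finset.card_sdiff_of_subset hUB, (hT B hB).2, hUc, if_pos hUB, Nat.mul_one]
    · have hfe : (Finset.Icc 1 v \ U).filter (fun x => insert x U ⊆ B) = ∅ := by
        apply Finset.filter_false_of_mem
        intro x _ hx
        exact hUB (Finset.subset_insert x U |>.trans hx)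
      rw [hfe, if_neg hUB, Finset.card_empty, Nat.mul_zero]
  have h1 := key T1 hT1
  have h2 := key T2 hT2
  have hsum : ∑ x ∈ Finset.Icc 1 v \ U, (T1.filter fun B => insert x U ⊆ B).card
      = ∑ x ∈ Finset.Icc 1 v \ U, (T2.filter fun B => insert x U ⊆ B).card := by
    refine Finset.sum_congr rfl ?_
    intro x hx
    rw [Finset.mem_sdiff] at hx
    refine h _ (Finset.insert_subset_iff.mpr ⟨hx.1, hU⟩) ?_
    rw [Finset.card_insert_of_notMem hx.2, hUc]
  rw [h1, h2] at hsum
  have hk : 0 < k - t := by omega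
  exact Nat.eq_of_mul_eq_mul_left hk hsum

lemma counts_le (v k : ℕ) (T1 T2 : Finset (Finset ℕ))
    (hT1 : ∀ B ∈ T1, B ⊆ Finset.Icc 1 v ∧ B.card = k)
    (hT2 : ∀ B ∈ T2, B ⊆ Finset.Icc 1 v ∧ B.card = k) :
    ∀ t, t ≤ k → (∀ U ⊆ Finset.Icc 1 v, U.card = t →
      (T1.filter fun B => U ⊆ B).card = (T2.filter fun B => U ⊆ B).card) →
    ∀ s ≤ t, ∀ U ⊆ Finset.Icc 1 v, U.card = s →
      (T1.filter fun B => U ⊆ B).card = (T2.filter fun B => U ⊆ B).card := by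
  intro t
  induction t with
  | zero =>
    intro _ hcond s hs
    exact (Nat.le_zero.mp hs) ▸ hcond
  | succ t ih =>
    intro htk hcond s hs
    rcases Nat.eq_or_lt_of_le hs with h | h
    · exact h ▸ hcond
    · exact ih (by omega) (counts_down v k t T1 T2 hT1 hT2 htk hcond) s (by omega)

lemma trade_bound : ∀ t v k (T1 T2 : Finset (Finset ℕ)), t < k → k < v →
    IsTrade v k t T1 T2 → 2 ^ t ≤ T1.card := by
  intro t
  induction t with
  | zero =>
    intro v k T1 T2 _ _ h
    simpa using h.2.2.2.2.1
  | succ t ih =>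
    intro v k T1 T2 htk hkv h
    obtain ⟨hT1, hT2, hdisj, hcard, hpos, hcond⟩ := h
    have hlev := counts_le v k T1 T2 hT1 hT2 (t + 1) (by omega) hcond
    -- Step 1: T1 has at least two blocks
    have h2 : 2 ≤ T1.card := by
      by_contra hlt
      have hone : T1.card = 1 := by omega
      obtain ⟨B, hB⟩ := Finset.card_eq_one.mp hone
      obtain ⟨C, hC⟩ := Finset.card_eq_one.mp (hcard ▸ hone)
      have hBC : B ≠ C := by
        intro hEq
        have : B ∈ T1 ∩ T2 := by
          rw [Finset.mem_inter, hB, hC, hEq]; simp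
        rw [Finset.disjoint_iff_inter_eq_empty.mp hdisj] at this
        simp at this
      have hBT1 : B ∈ T1 := by rw [hB]; simp
      have hCT2 : C ∈ T2 := by rw [hC]; simp
      have hsub : B ⊆ C := by
        intro u hu
        have h1 := hlev 1 (by omega) {u}
          (by simpa using (hT1 B hBT1).1 hu) (Finset.card_singleton u)
        rw [hB, hC] at h1
        have hl : ({B} : Finset (Finset ℕ)).filter (fun X => {u} ⊆ X) = {B} := by
          rw [Finset.filter_singleton, if_pos (Finset.singleton_subset_iff.mpr hu)]
        rw [hl] at h1
        by_cases huC : ({u} : Finset ℕ) ⊆ C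
        · exact Finset.singleton_subset_iff.mp huC
        · rw [Finset.filter_singleton, if_neg huC] at h1; simp at h1
      exact hBC (Finset.eq_of_subset_of_card_le hsub
        (by rw [(hT1 B hBT1).2, (hT2 C hCT2).2]))
    -- Step 2: pick a point x in some block but not another
    obtain ⟨B0, hB0, B1, hB1, hB01⟩ := Finset.one_lt_card.mp h2
    have hne : (B0 \ B1).Nonempty := by
      rw [Finset.sdiff_nonempty]
      intro hsub
      exact hB01 (Finset.eq_of_subset_of_card_le hsub
        (by rw [(hT1 B0 hB0).2, (hT1 B1 hB1).2]))
    obtain ⟨x, hx⟩ := hne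
    rw [Finset.mem_sdiff] at hx
    obtain ⟨hxB0, hxB1⟩ := hx
    have hxIcc : x ∈ Finset.Icc 1 v := (hT1 B0 hB0).1 hxB0
    set D1 := T1.filter (fun B => x ∈ B) with hD1def
    set D2 := T2.filter (fun B => x ∈ B) with hD2def
    set E1 := T1.filter (fun B => x ∉ B) with hE1def
    set E2 := T2.filter (fun B => x ∉ B) with hE2def
    -- D1 and D2 have equal cards (level-1 condition)
    have hDcard : D1.card = D2.card := by
      have h1 := hlev 1 (by omega) {x} (by simpa using hxIcc) (Finset.card_singleton x)
      simpa [hD1def, hD2def, Finset.singleton_subset_iff] using h1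
    have hsplit1 : D1.card + E1.card = T1.card :=
      Finset.card_filter_add_card_filter_not (fun B => x ∈ B)
    have hsplit2 : D2.card + E2.card = T2.card :=
      Finset.card_filter_add_card_filter_not (fun B => x ∈ B)
    -- injectivity of erase on families of sets containing x
    have hinj1 : Set.InjOn (fun B => Finset.erase B x) ↑D1 := by
      intro A hA B hB hEq
      rw [Finset.mem_coe, hD1def, Finset.mem_filter] at hA hB
      have hEq' : A.erase x = B.erase x := hEq
      rw [← Finset.insert_erase hA.2, ← Finset.insert_erase hB.2, hEq']
    have hinj2 : Set.InjOn (fun B => Finset.erase B x) ↑D2 := by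
      intro A hA B hB hEq
      rw [Finset.mem_coe, hD2def, Finset.mem_filter] at hA hB
      have hEq' : A.erase x = B.erase x := hEq
      rw [← Finset.insert_erase hA.2, ← Finset.insert_erase hB.2, hEq']
    set T1' := D1.image (fun B => Finset.erase B x) with hT1'def
    set T2' := D2.image (fun B => Finset.erase B x) with hT2'def
    have hc1' : T1'.card = D1.card := Finset.card_image_of_injOn hinj1
    have hc2' : T2'.card = D2.card := Finset.card_image_of_injOn hinj2
    -- the derived trade
    have hDer : IsTrade v (k - 1) t T1' T2' := by
      refine ⟨?_, ?_, ?_, ?_, ?_, ?_⟩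
      · intro B' hB'
        obtain ⟨B, hB, rfl⟩ := Finset.mem_image.mp hB'
        rw [hD1def, Finset.mem_filter] at hB
        exact ⟨(Finset.erase_subset x B).trans (hT1 B hB.1).1,
          by rw [Finset.card_erase_of_mem hB.2, (hT1 B hB.1).2]⟩
      · intro B' hB'
        obtain ⟨B, hB, rfl⟩ := Finset.mem_image.mp hB'
        rw [hD2def, Finset.mem_filter] at hB
        exact ⟨(Finset.erase_subset x B).trans (hT2 B hB.1).1,
          by rw [Finset.card_erase_of_mem hB.2, (hT2 B hB.1).2]⟩
      · rw [Finset.disjoint_left]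
        intro A hA1 hA2
        obtain ⟨B, hB, hBe⟩ := Finset.mem_image.mp hA1
        obtain ⟨C, hC, hCe⟩ := Finset.mem_image.mp hA2
        rw [hD1def, Finset.mem_filter] at hB
        rw [hD2def, Finset.mem_filter] at hC
        have : B = C := by
          rw [← Finset.insert_erase hB.2, ← Finset.insert_erase hC.2, hBe, hCe]
        exact Finset.disjoint_left.mp hdisj hB.1 (this ▸ hC.1)
      · rw [hc1', hc2', hDcard]
      · rw [hc1']
        have : B0 ∈ D1 := by rw [hD1def, Finset.mem_filter]; exact ⟨hB0, hxB0⟩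
        exact Finset.card_pos.mpr ⟨B0, this⟩
      · intro U hU hUc
        by_cases hxU : x ∈ U
        · have he1 : T1'.filter (fun B => U ⊆ B) = ∅ := by
            apply Finset.filter_false_of_mem
            intro B' hB' hUB'
            obtain ⟨B, hB, rfl⟩ := Finset.mem_image.mp hB'
            exact Finset.notMem_erase x B (hUB' hxU)
          have he2 : T2'.filter (fun B => U ⊆ B) = ∅ := by
            apply Finset.filter_false_of_mem
            intro B' hB' hUB'
            obtain ⟨B, hB, rfl⟩ := Finset.mem_image.mp hB'
            exact Finset.notMem_erase x B (hUB' hxU)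
          rw [he1, he2]
        · have key : ∀ (T : Finset (Finset ℕ)),
              ((T.filter (fun B => x ∈ B)).filter (fun B => U ⊆ Finset.erase B x))
                = T.filter (fun B => insert x U ⊆ B) := by
            intro T
            rw [Finset.filter_filter]
            apply Finset.filter_congr
            intro B _
            rw [Finset.subset_erase, Finset.insert_subset_iff]
            constructor
            · rintro ⟨h1, h2, _⟩; exact ⟨h1, h2⟩
            · rintro ⟨h1, h2⟩; exact ⟨h1, h2, hxU⟩
          have him1 : T1'.filter (fun B => U ⊆ B)
              = ((D1.filter (fun B => U ⊆ Finset.erase B x)).image (fun B => Finset.erase B x)) := by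
            rw [hT1'def, Finset.filter_image]
          have him2 : T2'.filter (fun B => U ⊆ B)
              = ((D2.filter (fun B => U ⊆ Finset.erase B x)).image (fun B => Finset.erase B x)) := by
            rw [hT2'def, Finset.filter_image]
          rw [him1, him2,
            Finset.card_image_of_injOn (hinj1.mono (Finset.coe_subset.mpr (Finset.filter_subset _ _))),
            Finset.card_image_of_injOn (hinj2.mono (Finset.coe_subset.mpr (Finset.filter_subset _ _))),
            hD1def, hD2def, key T1, key T2]
          exact hcond (insert x U) (Finset.insert_subset_iff.mpr ⟨hxIcc, hU⟩)
            (by rw [Finset.card_insert_of_notMem hxU, hUc])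
    -- the residual trade
    have hRes : IsTrade v k t E1 E2 := by
      refine ⟨fun B hB => hT1 B (Finset.filter_subset _ _ hB),
        fun B hB => hT2 B (Finset.filter_subset _ _ hB),
        hdisj.mono (Finset.filter_subset _ _) (Finset.filter_subset _ _),
        by omega, ?_, ?_⟩
      · have : B1 ∈ E1 := by rw [hE1def, Finset.mem_filter]; exact ⟨hB1, hxB1⟩
        exact Finset.card_pos.mpr ⟨B1, this⟩
      · intro U hU hUc
        by_cases hxU : x ∈ U
        · have he1 : E1.filter (fun B => U ⊆ B) = ∅ := by
            apply Finset.filter_false_of_mem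
            intro B hB hUB
            rw [hE1def, Finset.mem_filter] at hB
            exact hB.2 (hUB hxU)
          have he2 : E2.filter (fun B => U ⊆ B) = ∅ := by
            apply Finset.filter_false_of_mem
            intro B hB hUB
            rw [hE2def, Finset.mem_filter] at hB
            exact hB.2 (hUB hxU)
          rw [he1, he2]
        · have key : ∀ (T : Finset (Finset ℕ)),
              (T.filter (fun B => U ⊆ B)).card
                = (T.filter (fun B => insert x U ⊆ B)).card
                  + ((T.filter (fun B => x ∉ B)).filter (fun B => U ⊆ B)).card := by
            intro T
            have hs := Finset.card_filter_add_card_filter_not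
              (s := T.filter (fun B => U ⊆ B)) (fun B => x ∈ B)
            rw [Finset.filter_filter, Finset.filter_filter] at hs
            have e1 : T.filter (fun B => U ⊆ B ∧ x ∈ B)
                = T.filter (fun B => insert x U ⊆ B) := by
              apply Finset.filter_congr
              intro B _
              rw [Finset.insert_subset_iff]
              exact ⟨fun ⟨a, b⟩ => ⟨b, a⟩, fun ⟨a, b⟩ => ⟨b, a⟩⟩
            have e2 : T.filter (fun B => U ⊆ B ∧ x ∉ B)
                = (T.filter (fun B => x ∉ B)).filter (fun B => U ⊆ B) := by
              rw [Finset.filter_filter]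
              apply Finset.filter_congr
              intro B _
              exact ⟨fun ⟨a, b⟩ => ⟨b, a⟩, fun ⟨a, b⟩ => ⟨b, a⟩⟩
            rw [e1, e2] at hs
            omega
          have hA := hlev t (by omega) U hU hUc
          have hB := hcond (insert x U) (Finset.insert_subset_iff.mpr ⟨hxIcc, hU⟩)
            (by rw [Finset.card_insert_of_notMem hxU, hUc])
          have k1 := key T1
          have k2 := key T2
          rw [hE1def, hE2def]
          omega
    have ihD := ih v (k - 1) T1' T2' (by omega) (by omega) hDer
    have ihE := ih v k E1 E2 (by omega) hkv hRes
    rw [hc1'] at ihD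
    have : 2 ^ (t + 1) = 2 ^ t + 2 ^ t := by ring
    omega

/-- Every `(v,k,t)` trade (with `0 < t < k < v`) has volume at least `2^t`. -/
theorem trade_volume_lower_bound (v k t : ℕ)
    (ht : 0 < t) (htk : t < k) (hkv : k < v)
    (T1 T2 : Finset (Finset ℕ)) (h : IsTrade v k t T1 T2) :
    2 ^ t ≤ T1.card := by
  exact trade_bound t v k T1 T2 htk hkv h
end

section
/- Let v, k, t be positive integers and let S₁, S₂, …, S_{2t+3} be pairwise disjoint subsets of {1,…,v} (S_{2t+3} possibly empty) satisfying: (i) |S_{2i−1}| = |S_{2i}| ≥ 1 for i = 1,…,t+1, and (ii) Σ_{i=1}^{t+2} |S_{2i−1}| = k. For each subset A ⊆ {1,…,t+1} define the block B_A = (⋃_{i∉A} S_{2i−1}) ∪ (⋃_{i∈A} S_{2i}) ∪ S_{2t+3}. Then T¹ = {B_A : A ⊆ {1,…,t+1}, |A| even} and T² = {B_A : A ⊆ {1,…,t+1}, |A| odd} form a (v,k,t) trade of volume 2^t: every block B_A has exactly k elements, |T¹| = |T²| = 2^t, T¹ and T² are disjoint, and every t-element subset of {1,…,v} is contained in the same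 number of blocks of T¹ as of T². -/
def toggle (m : ℕ) (A : Finset ℕ) : Finset ℕ := if m ∈ A then A.erase m else insert m A

lemma toggle_toggle (m : ℕ) (A : Finset ℕ) : toggle m (toggle m A) = A := by
  unfold toggle
  by_cases h : m ∈ A <;> simp [h, Finset.insert_erase, Finset.erase_insert]

lemma mem_toggle_iff {m j : ℕ} (A : Finset ℕ) (h : j ≠ m) : j ∈ toggle m A ↔ j ∈ A := by
  unfold toggle; split <;> simp [h]

lemma toggle_subset {m : ℕ} {s A : Finset ℕ} (hm : m ∈ s) (h : A ⊆ s) : toggle m A ⊆ s := by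
  unfold toggle; split
  · exact (A.erase_subset m).trans h
  · exact Finset.insert_subset hm h

lemma toggle_parity (m : ℕ) (A : Finset ℕ) : Even (toggle m A).card ↔ ¬ Even A.card := by
  unfold toggle; split
  · rename_i h
    have hpos : 1 ≤ A.card := Finset.card_pos.mpr ⟨m, h⟩
    rw [Finset.card_erase_of_mem h, Nat.even_sub hpos]
    simp [Nat.even_iff, Nat.odd_iff]
  · rename_i h
    rw [Finset.card_insert_of_notMem h, Nat.even_add_one]

lemma toggle_filter_card (s : Finset ℕ) (m : ℕ) (hm : m ∈ s) (P : Finset ℕ → Prop) [DecidablePred P]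
    (hP : ∀ A ∈ s.powerset, (P A ↔ P (toggle m A))) :
    (s.powerset.filter fun A => Even A.card ∧ P A).card =
    (s.powerset.filter fun A => ¬ Even A.card ∧ P A).card := by
  apply Finset.card_bij' (fun A _ => toggle m A) (fun A _ => toggle m A)
  · intro A hA
    simp only [Finset.mem_filter, Finset.mem_powerset] at hA ⊢
    refine ⟨toggle_subset hm hA.1, ?_, ?_⟩
    · rw [toggle_parity]; simp [hA.2.1]
    · exact (hP A (Finset.mem_powerset.mpr hA.1)).mp hA.2.2
  · intro A hA
    simp only [Finset.mem_filter, Finset.mem_powerset] at hA ⊢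
    refine ⟨toggle_subset hm hA.1, ?_, ?_⟩
    · rw [toggle_parity]; simpa using hA.2.1
    · exact (hP A (Finset.mem_powerset.mpr hA.1)).mp hA.2.2
  · intro A hA; exact toggle_toggle m A
  · intro A hA; exact toggle_toggle m A

/-- Hwang's construction: given pairwise disjoint defining sets
`S 1, …, S (2t+3) ⊆ {1,…,v}` with `|S (2i-1)| = |S (2i)| ≥ 1` for `i = 1,…,t+1`
and `∑_{i=1}^{t+2} |S (2i-1)| = k`, the blocks
`B A = (⋃_{i ∉ A} S (2i-1)) ∪ (⋃_{i ∈ A} S (2i)) ∪ S (2t+3)` for `A ⊆ {1,…,t+1}`,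
split according to the parity of `|A|`, form a `(v,k,t)` trade of volume `2^t`,
and every block `B A` has exactly `k` elements. -/
theorem hwang_construction_is_trade (v k t : ℕ) (hv : 0 < v) (hk : 0 < k) (ht : 0 < t)
    (S : ℕ → Finset ℕ)
    (hsub : ∀ i ∈ Finset.Icc 1 (2*t+3), S i ⊆ Finset.Icc 1 v)
    (hdisj : ∀ i ∈ Finset.Icc 1 (2*t+3), ∀ j ∈ Finset.Icc 1 (2*t+3),
      i ≠ j → Disjoint (S i) (S j))
    (hpair : ∀ i ∈ Finset.Icc 1 (t+1),
      (S (2*i-1)).card = (S (2*i)).card ∧ 1 ≤ (S (2*i-1)).card)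
    (hsum : ∑ i ∈ Finset.Icc 1 (t+2), (S (2*i-1)).card = k)
    (B : Finset ℕ → Finset ℕ)
    (hB : ∀ A, B A = ((Finset.Icc 1 (t+1)).biUnion fun i =>
        if i ∈ A then S (2*i) else S (2*i-1)) ∪ S (2*t+3))
    (T1 T2 : Finset (Finset ℕ))
    (hT1 : T1 = ((Finset.Icc 1 (t+1)).powerset.filter fun A => Even A.card).image B)
    (hT2 : T2 = ((Finset.Icc 1 (t+1)).powerset.filter fun A => ¬ Even A.card).image B) :
    IsTrade v k t T1 T2 ∧ T1.card = 2 ^ t ∧ T2.card = 2 ^ t ∧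
      ∀ A ∈ (Finset.Icc 1 (t+1)).powerset, (B A).card = k := by
  classical
  -- disjointness helper specialized
  have hd : ∀ a b : ℕ, 1 ≤ a → a ≤ 2*t+3 → 1 ≤ b → b ≤ 2*t+3 → a ≠ b →
      Disjoint (S a) (S b) := by
    intro a b h1 h2 h3 h4 h5
    exact hdisj a (Finset.mem_Icc.mpr ⟨h1, h2⟩) b (Finset.mem_Icc.mpr ⟨h3, h4⟩) h5
  have key : ∀ x a b, 1 ≤ a → a ≤ 2*t+3 → 1 ≤ b → b ≤ 2*t+3 → x ∈ S a → x ∈ S b → a = b := by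
    intro x a b h1 h2 h3 h4 hxa hxb
    by_contra h
    exact (Finset.disjoint_left.mp (hd a b h1 h2 h3 h4 h) hxa) hxb
  -- component function
  set f : Finset ℕ → ℕ → Finset ℕ := fun A i => if i ∈ A then S (2*i) else S (2*i-1) with hf
  have hcomp_disj : ∀ A, ∀ i ∈ Finset.Icc 1 (t+1), ∀ j ∈ Finset.Icc 1 (t+1), i ≠ j →
      Disjoint (f A i) (f A j) := by
    intro A i hi j hj hij
    rw [Finset.mem_Icc] at hi hj
    simp only [hf]
    split <;> split <;> apply hd <;> omega
  have htail_disj : ∀ A, ∀ i ∈ Finset.Icc 1 (t+1), Disjoint (f A i) (S (2*t+3)) := by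
    intro A i hi
    rw [Finset.mem_Icc] at hi
    simp only [hf]
    split <;> apply hd <;> omega
  -- cardinality of each block
  have hcardB : ∀ A, (B A).card = k := by
    intro A
    rw [hB, Finset.card_union_of_disjoint, Finset.card_biUnion (hcomp_disj A)]
    · have he : ∀ i ∈ Finset.Icc 1 (t+1), (f A i).card = (S (2*i-1)).card := by
        intro i hi
        simp only [hf]
        split
        · exact ((hpair i hi).1).symm
        · rfl
      rw [Finset.sum_congr rfl he, ← hsum, show t+2 = (t+1)+1 from rfl,
        Finset.sum_Icc_succ_top (by omega : 1 ≤ t+1+1)]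
      have h23 : 2*(t+1+1)-1 = 2*t+3 := by omega
      rw [h23]
    · rw [Finset.disjoint_biUnion_left]
      exact htail_disj A
  -- blocks lie in {1,…,v}
  have hBsub : ∀ A, B A ⊆ Finset.Icc 1 v := by
    intro A
    rw [hB]
    apply Finset.union_subset
    · apply Finset.biUnion_subset.mpr
      intro i hi
      rw [Finset.mem_Icc] at hi
      split
      · exact hsub (2*i) (Finset.mem_Icc.mpr (by omega))
      · exact hsub (2*i-1) (Finset.mem_Icc.mpr (by omega))
    · exact hsub (2*t+3) (Finset.mem_Icc.mpr (by omega))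
  -- membership characterization
  have hmemB : ∀ A x, x ∈ B A ↔
      (∃ j ∈ Finset.Icc 1 (t+1), x ∈ (if j ∈ A then S (2*j) else S (2*j-1))) ∨
        x ∈ S (2*t+3) := by
    intro A x
    rw [hB]
    simp [Finset.mem_union, Finset.mem_biUnion]
  -- forced membership facts
  have hin2 : ∀ i ∈ Finset.Icc 1 (t+1), ∀ x ∈ S (2*i), ∀ A, x ∈ B A → i ∈ A := by
    intro i hi x hx A hxB
    rw [Finset.mem_Icc] at hi
    rcases (hmemB A x).mp hxB with ⟨j, hj, hxj⟩ | hxt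
    · rw [Finset.mem_Icc] at hj
      by_cases hjA : j ∈ A
      · rw [if_pos hjA] at hxj
        have := key x (2*i) (2*j) (by omega) (by omega) (by omega) (by omega) hx hxj
        have : i = j := by omega
        exact this ▸ hjA
      · rw [if_neg hjA] at hxj
        have := key x (2*i) (2*j-1) (by omega) (by omega) (by omega) (by omega) hx hxj
        omega
    · have := key x (2*i) (2*t+3) (by omega) (by omega) (by omega) (by omega) hx hxt
      omega
  have hin1 : ∀ i ∈ Finset.Icc 1 (t+1), ∀ x ∈ S (2*i-1), ∀ A, x ∈ B A → i ∉ A := by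
    intro i hi x hx A hxB
    rw [Finset.mem_Icc] at hi
    rcases (hmemB A x).mp hxB with ⟨j, hj, hxj⟩ | hxt
    · rw [Finset.mem_Icc] at hj
      by_cases hjA : j ∈ A
      · rw [if_pos hjA] at hxj
        have := key x (2*i-1) (2*j) (by omega) (by omega) (by omega) (by omega) hx hxj
        omega
      · rw [if_neg hjA] at hxj
        have := key x (2*i-1) (2*j-1) (by omega) (by omega) (by omega) (by omega) hx hxj
        have : i = j := by omega
        exact this ▸ hjA
    · have := key x (2*i-1) (2*t+3) (by omega) (by omega) (by omega) (by omega) hx hxt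
      omega
  -- forward membership constructors
  have hC2 : ∀ i ∈ Finset.Icc 1 (t+1), ∀ A, i ∈ A → ∀ x ∈ S (2*i), x ∈ B A := by
    intro i hi A hiA x hx
    exact (hmemB A x).mpr (Or.inl ⟨i, hi, by rw [if_pos hiA]; exact hx⟩)
  have hC1 : ∀ i ∈ Finset.Icc 1 (t+1), ∀ A, i ∉ A → ∀ x ∈ S (2*i-1), x ∈ B A := by
    intro i hi A hiA x hx
    exact (hmemB A x).mpr (Or.inl ⟨i, hi, by rw [if_neg hiA]; exact hx⟩)
  -- injectivity on subsets of Icc 1 (t+1)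
  have hBne : ∀ A1 A2 : Finset ℕ, A1 ⊆ Finset.Icc 1 (t+1) → ∀ i ∈ A1, i ∉ A2 →
      B A1 ≠ B A2 := by
    intro A1 A2 h1 i hiA1 hiA2 heq
    have hiIcc : i ∈ Finset.Icc 1 (t+1) := h1 hiA1
    have hne : (S (2*i)).Nonempty := by
      rw [← Finset.card_pos, ← (hpair i hiIcc).1]
      exact (hpair i hiIcc).2
    obtain ⟨x, hx⟩ := hne
    have hx1 : x ∈ B A1 := hC2 i hiIcc A1 hiA1 x hx
    rw [heq] at hx1
    exact hiA2 (hin2 i hiIcc x hx A2 hx1)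
  have hBinj : Set.InjOn B ↑((Finset.Icc 1 (t+1)).powerset) := by
    intro A1 h1 A2 h2 heq
    simp only [Finset.coe_powerset, Set.mem_preimage, Set.mem_powerset_iff,
      Finset.coe_subset] at h1 h2
    by_contra hne
    have hcase : ¬ (A1 ⊆ A2) ∨ ¬ (A2 ⊆ A1) := by
      by_contra h
      push_neg at h
      exact hne (Finset.Subset.antisymm h.1 h.2)
    rcases hcase with h | h
    · obtain ⟨i, hi1, hi2⟩ := Finset.not_subset.mp h
      exact hBne A1 A2 h1 i hi1 hi2 heq
    · obtain ⟨i, hi2, hi1⟩ := Finset.not_subset.mp h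
      exact hBne A2 A1 h2 i hi2 hi1 heq.symm
  -- sizes of the two families
  have hmIcc1 : (1:ℕ) ∈ Finset.Icc 1 (t+1) := Finset.mem_Icc.mpr (by omega)
  have hhalf := toggle_filter_card (Finset.Icc 1 (t+1)) 1 hmIcc1 (fun _ => True)
    (fun A _ => Iff.rfl)
  simp only [and_true] at hhalf
  have hpow : ((Finset.Icc 1 (t+1)).powerset.filter fun A => Even A.card).card +
      ((Finset.Icc 1 (t+1)).powerset.filter fun A => ¬ Even A.card).card = 2^(t+1) := by
    rw [Finset.card_filter_add_card_filter_not, Finset.card_powerset, Nat.card_Icc]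
    norm_num
  have hps : 2^(t+1) = 2^t + 2^t := by rw [pow_succ]; ring
  have hEven : ((Finset.Icc 1 (t+1)).powerset.filter fun A => Even A.card).card = 2^t := by
    omega
  have hOdd : ((Finset.Icc 1 (t+1)).powerset.filter fun A => ¬ Even A.card).card = 2^t := by
    omega
  have hT1card : T1.card = 2^t := by
    rw [hT1, Finset.card_image_of_injOn
      (hBinj.mono (Finset.coe_subset.mpr (Finset.filter_subset _ _)))]
    exact hEven
  have hT2card : T2.card = 2^t := by
    rw [hT2, Finset.card_image_of_injOn
      (hBinj.mono (Finset.coe_subset.mpr (Finset.filter_subset _ _)))]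
    exact hOdd
  -- the two families are disjoint
  have hdisjT : Disjoint T1 T2 := by
    rw [Finset.disjoint_left]
    intro X hX1 hX2
    rw [hT1, Finset.mem_image] at hX1
    rw [hT2, Finset.mem_image] at hX2
    obtain ⟨A1, hA1, hBA1⟩ := hX1
    obtain ⟨A2, hA2, hBA2⟩ := hX2
    rw [Finset.mem_filter] at hA1 hA2
    have hAeq : A1 = A2 := hBinj (Finset.mem_coe.mpr (Finset.mem_powerset.mpr
      (Finset.mem_powerset.mp hA1.1))) (Finset.mem_coe.mpr hA2.1) (hBA1.trans hBA2.symm)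
    exact hA2.2 (hAeq ▸ hA1.2)
  -- the trade condition
  have hcount : ∀ U ⊆ Finset.Icc 1 v, U.card = t →
      (T1.filter fun Bl => U ⊆ Bl).card = (T2.filter fun Bl => U ⊆ Bl).card := by
    intro U hU hUcard
    set I0 := (Finset.Icc 1 (t+1)).filter (fun i => (U ∩ S (2*i-1)).Nonempty) with hI0
    set I1 := (Finset.Icc 1 (t+1)).filter (fun i => (U ∩ S (2*i)).Nonempty) with hI1
    have hb0 : I0.card ≤ ∑ i ∈ Finset.Icc 1 (t+1), (U ∩ S (2*i-1)).card := by
      calc I0.card = ∑ i ∈ I0, 1 := Finset.card_eq_sum_ones I0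
        _ ≤ ∑ i ∈ I0, (U ∩ S (2*i-1)).card :=
            Finset.sum_le_sum (fun i hi => Finset.card_pos.mpr (Finset.mem_filter.mp hi).2)
        _ ≤ _ := Finset.sum_le_sum_of_subset (Finset.filter_subset _ _)
    have hb1 : I1.card ≤ ∑ i ∈ Finset.Icc 1 (t+1), (U ∩ S (2*i)).card := by
      calc I1.card = ∑ i ∈ I1, 1 := Finset.card_eq_sum_ones I1
        _ ≤ ∑ i ∈ I1, (U ∩ S (2*i)).card :=
            Finset.sum_le_sum (fun i hi => Finset.card_pos.mpr (Finset.mem_filter.mp hi).2)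
        _ ≤ _ := Finset.sum_le_sum_of_subset (Finset.filter_subset _ _)
    have hbig : ∑ i ∈ Finset.Icc 1 (t+1), (U ∩ S (2*i-1)).card +
        ∑ i ∈ Finset.Icc 1 (t+1), (U ∩ S (2*i)).card ≤ t := by
      rw [← Finset.sum_add_distrib]
      have hst : ∀ i ∈ Finset.Icc 1 (t+1), (U ∩ S (2*i-1)).card + (U ∩ S (2*i)).card =
          (U ∩ (S (2*i-1) ∪ S (2*i))).card := by
        intro i hi
        rw [Finset.mem_Icc] at hi
        rw [Finset.inter_union_distrib_left, Finset.card_union_of_disjoint]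
        exact (hd (2*i-1) (2*i) (by omega) (by omega) (by omega) (by omega) (by omega)).mono
          Finset.inter_subset_right Finset.inter_subset_right
      rw [Finset.sum_congr rfl hst]
      have hdd : ∀ i ∈ Finset.Icc 1 (t+1), ∀ j ∈ Finset.Icc 1 (t+1), i ≠ j →
          Disjoint (U ∩ (S (2*i-1) ∪ S (2*i))) (U ∩ (S (2*j-1) ∪ S (2*j))) := by
        intro i hi j hj hij
        rw [Finset.mem_Icc] at hi hj
        refine Disjoint.mono Finset.inter_subset_right Finset.inter_subset_right ?_
        simp only [Finset.disjoint_union_left, Finset.disjoint_union_right]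
        refine ⟨⟨?_, ?_⟩, ?_, ?_⟩ <;> apply hd <;> omega
      rw [← Finset.card_biUnion hdd]
      calc _ ≤ U.card := Finset.card_le_card
              (Finset.biUnion_subset.mpr fun i _ => Finset.inter_subset_left)
        _ = t := hUcard
    have hcardlt : (I0 ∪ I1).card < (Finset.Icc 1 (t+1)).card := by
      have := Finset.card_union_le I0 I1
      rw [Nat.card_Icc]
      omega
    obtain ⟨m, hmIcc, hmnot⟩ : ∃ m ∈ Finset.Icc 1 (t+1), m ∉ I0 ∪ I1 := by
      by_contra h
      push_neg at h
      exact absurd (Finset.card_le_card h) (by omega)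
    rw [Finset.mem_union] at hmnot
    push_neg at hmnot
    have hstep : ∀ A1 A2 : Finset ℕ, (∀ j, j ≠ m → (j ∈ A1 ↔ j ∈ A2)) →
        U ⊆ B A1 → U ⊆ B A2 := by
      intro A1 A2 hAA h1 u hu
      have hu1 : u ∈ B A1 := h1 hu
      rcases (hmemB A1 u).mp hu1 with ⟨j, hj, hxj⟩ | hxt
      · by_cases hjA : j ∈ A1
        · rw [if_pos hjA] at hxj
          have hjI1 : j ∈ I1 :=
            Finset.mem_filter.mpr ⟨hj, ⟨u, Finset.mem_inter.mpr ⟨hu, hxj⟩⟩⟩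
          have hjm : j ≠ m := by rintro rfl; exact hmnot.2 hjI1
          exact hC2 j hj A2 ((hAA j hjm).mp hjA) u hxj
        · rw [if_neg hjA] at hxj
          have hjI0 : j ∈ I0 :=
            Finset.mem_filter.mpr ⟨hj, ⟨u, Finset.mem_inter.mpr ⟨hu, hxj⟩⟩⟩
          have hjm : j ≠ m := by rintro rfl; exact hmnot.1 hjI0
          exact hC1 j hj A2 (fun hjA2 => hjA ((hAA j hjm).mpr hjA2)) u hxj
      · exact (hmemB A2 u).mpr (Or.inr hxt)
    have hP : ∀ A ∈ (Finset.Icc 1 (t+1)).powerset, ((U ⊆ B A) ↔ (U ⊆ B (toggle m A))) := by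
      intro A _
      constructor
      · exact hstep A (toggle m A) (fun j hj => (mem_toggle_iff A hj).symm)
      · exact hstep (toggle m A) A (fun j hj => mem_toggle_iff A hj)
    have hmain := toggle_filter_card (Finset.Icc 1 (t+1)) m hmIcc (fun A => U ⊆ B A) hP
    rw [hT1, hT2, Finset.filter_image, Finset.filter_image,
      Finset.card_image_of_injOn (hBinj.mono (Finset.coe_subset.mpr
        ((Finset.filter_subset _ _).trans (Finset.filter_subset _ _)))),
      Finset.card_image_of_injOn (hBinj.mono (Finset.coe_subset.mpr
        ((Finset.filter_subset _ _).trans (Finset.filter_subset _ _)))),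
      Finset.filter_filter, Finset.filter_filter]
    exact hmain
  -- assemble
  refine ⟨⟨?_, ?_, hdisjT, by rw [hT1card, hT2card], by rw [hT1card]; exact Nat.one_le_two_pow, hcount⟩,
    hT1card, hT2card, fun A _ => hcardB A⟩
  · intro Bl hBl
    rw [hT1, Finset.mem_image] at hBl
    obtain ⟨A, _, rfl⟩ := hBl
    exact ⟨hBsub A, hcardB A⟩
  · intro Bl hBl
    rw [hT2, Finset.mem_image] at hBl
    obtain ⟨A, _, rfl⟩ := hBl
    exact ⟨hBsub A, hcardB A⟩
end

section
/- For every positive integer t, the number of balanced companion families on {1,…,4(t+1)}, counted as unordered sets of unordered companion pairs of 2-element sets, is at least (2(t+1))! / ((t+1)! · 2^{t+1}). -/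
/-- A balanced companion family on `{1,…,4(t+1)}`, represented as an unordered set of
unordered companion pairs: `F` consists of `t+1` pairs, each pair consists of two
2-element subsets of `{1,…,4(t+1)}` with equal element sums, all the 2-element sets
involved are pairwise disjoint, and their union is all of `{1,…,4(t+1)}`. -/
def IsBalancedCompanionFamilySet (t : ℕ) (F : Finset (Finset (Finset ℕ))) : Prop :=
  F.card = t + 1 ∧
  (∀ P ∈ F, P.card = 2) ∧
  (∀ P ∈ F, ∀ A ∈ P, A ⊆ Finset.Icc 1 (4*(t+1)) ∧ A.card = 2) ∧
  (∀ P ∈ F, ∀ P' ∈ F, ∀ A ∈ P, ∀ A' ∈ P', A ≠ A' → Disjoint A A') ∧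
  (F.biUnion fun P => P.biUnion id) = Finset.Icc 1 (4*(t+1)) ∧
  (∀ P ∈ F, ∀ A ∈ P, ∀ A' ∈ P, A.sum id = A'.sum id)

/-!
The `2(t+1)` complementary pairs `{k + 1, 4(t+1) - k}`, `k < 2(t+1)`, partition `{1,…,4(t+1)}`
and all have sum `4(t+1) + 1`, so every partition of this set of pairs into blocks of size two
is itself a balanced companion family. A set of `2m` objects has at least `(2m - 1)‼` such
pairings (pair a fixed object with any of the other `2m - 1` and recurse on the rest), and
`(2m)! = 2^m m! (2m - 1)‼`.
-/

open Finset Nat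

section Pairing

variable {α : Type*} [DecidableEq α]

def IsPairing (s : Finset α) (M : Finset (Finset α)) : Prop :=
  (∀ P ∈ M, P.card = 2) ∧ (M : Set (Finset α)).PairwiseDisjoint id ∧ M.biUnion id = s

namespace IsPairing

variable {s : Finset α} {M : Finset (Finset α)}

theorem empty : IsPairing (∅ : Finset α) ∅ :=
  ⟨by simp, by simp, rfl⟩

theorem subset (hM : IsPairing s M) {P : Finset α} (hP : P ∈ M) : P ⊆ s :=
  hM.2.2 ▸ subset_biUnion_of_mem id hP

theorem not_mem_of_mem (hM : IsPairing s M) {a : α} (ha : a ∉ s) {P : Finset α}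
    (haP : a ∈ P) : P ∉ M :=
  fun hP => ha (hM.subset hP haP)

theorem two_mul_card (hM : IsPairing s M) : 2 * M.card = s.card := by
  rw [← hM.2.2, card_biUnion hM.2.1, sum_const_nat (m := 2) (f := fun P => #(id P)) hM.1,
    mul_comm]

theorem insert (hM : IsPairing s M) {P : Finset α} (hP : P.card = 2) (hPs : Disjoint P s) :
    IsPairing (P ∪ s) (insert P M) := by
  refine ⟨forall_mem_insert _ _ _ |>.mpr ⟨hP, hM.1⟩, ?_, ?_⟩
  · rw [coe_insert]
    exact hM.2.1.insert fun Q hQ _ => hPs.mono_right (hM.subset hQ)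
  · rw [biUnion_insert, hM.2.2, id]

end IsPairing

open Classical in
noncomputable def pairings (s : Finset α) : Finset (Finset (Finset α)) :=
  {M ∈ s.powerset.powerset | IsPairing s M}

theorem mem_pairings {s : Finset α} {M : Finset (Finset α)} :
    M ∈ pairings s ↔ IsPairing s M := by
  simp only [pairings, mem_filter, mem_powerset, and_iff_right_iff_imp]
  exact fun hM P hP => mem_powerset.mpr (hM.subset hP)

theorem sum_card_pairings_erase_le {s : Finset α} {a : α} (ha : a ∈ s) :
    ∑ b ∈ s.erase a, (pairings ((s.erase a).erase b)).card ≤ (pairings s).card := by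
  rw [← card_sigma]
  refine card_le_card_of_injOn (fun x => insert {a, x.1} x.2) ?_ ?_
  · rintro ⟨b, M⟩ hbM
    obtain ⟨hb, hM⟩ := mem_sigma.mp hbM
    have hs : {a, b} ∪ (s.erase a).erase b = s := by
      rw [insert_union, ← insert_eq, insert_erase hb, insert_erase ha]
    have hab : a ≠ b := (ne_of_mem_erase hb).symm
    exact hs ▸ mem_pairings.mpr ((mem_pairings.mp hM).insert (card_pair hab) (by simp))
  · rintro ⟨b, M⟩ hbM ⟨b', M'⟩ hbM' h
    simp only [coe_sigma, Set.mem_sigma_iff, mem_coe, mem_erase, mem_pairings] at hbM hbM' h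
    have hM : ∀ {P}, a ∈ P → P ∉ M := hbM.2.not_mem_of_mem (by simp)
    have hM' : ∀ {P}, a ∈ P → P ∉ M' := hbM'.2.not_mem_of_mem (by simp)
    have hpair : ({a, b'} : Finset α) = {a, b} :=
      (mem_insert.mp (h ▸ mem_insert_self _ _)).resolve_right (hM (mem_insert_self a _))
    obtain rfl : b' = b := by
      have : b' ∈ ({a, b} : Finset α) := hpair ▸ mem_insert_of_mem (mem_singleton_self b')
      simpa [hbM'.1.1] using this
    rw [← erase_insert (hM (mem_insert_self a _)), h, erase_insert (hM' (mem_insert_self a _))]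

theorem doubleFactorial_le_card_pairings :
    ∀ (m : ℕ) (s : Finset α), s.card = 2 * m → (2 * m - 1)‼ ≤ (pairings s).card
  | 0, s, hs => by
    rw [card_eq_zero.mp hs]
    exact card_pos.mpr ⟨∅, mem_pairings.mpr IsPairing.empty⟩
  | m + 1, s, hs => by
    obtain ⟨a, ha⟩ : s.Nonempty := card_pos.mp (by omega)
    calc (2 * (m + 1) - 1)‼ = (2 * m + 1) * (2 * m - 1)‼ := by
          rw [show 2 * (m + 1) - 1 = 2 * m + 1 by omega, doubleFactorial_add_one]
      _ = ∑ b ∈ s.erase a, (2 * m - 1)‼ := by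
          rw [sum_const, card_erase_of_mem ha, hs, smul_eq_mul,
            show 2 * (m + 1) - 1 = 2 * m + 1 by omega]
      _ ≤ ∑ b ∈ s.erase a, (pairings ((s.erase a).erase b)).card :=
          sum_le_sum fun b hb => doubleFactorial_le_card_pairings m _ <| by
            rw [card_erase_of_mem hb, card_erase_of_mem ha, hs]; omega
      _ ≤ (pairings s).card := sum_card_pairings_erase_le ha

end Pairing

theorem factorial_two_mul_div (m : ℕ) : (2 * m)! / (m ! * 2 ^ m) = (2 * m - 1)‼ := by
  cases m with
  | zero => rfl
  | succ m =>
    rw [show 2 * (m + 1) = 2 * m + 1 + 1 by ring, factorial_eq_mul_doubleFactorial,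
      show 2 * m + 1 + 1 = 2 * (m + 1) by ring, doubleFactorial_two_mul, mul_comm (2 ^ _),
      Nat.mul_div_cancel_left _ (by positivity), show 2 * (m + 1) - 1 = 2 * m + 1 by omega]

section ComplementaryPairs

variable {n k : ℕ}

def complementaryPair (n k : ℕ) : Finset ℕ := {k + 1, 4 * n - k}

def complementaryPairs (n : ℕ) : Finset (Finset ℕ) :=
  (range (2 * n)).image (complementaryPair n)

theorem mem_complementaryPair {x : ℕ} :
    x ∈ complementaryPair n k ↔ x = k + 1 ∨ x = 4 * n - k := by
  simp [complementaryPair]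

theorem card_complementaryPair : (complementaryPair n k).card = 2 :=
  card_pair (by omega)

theorem sum_complementaryPair (hk : k < 2 * n) :
    (complementaryPair n k).sum id = 4 * n + 1 := by
  rw [complementaryPair, sum_pair (by omega), id, id]
  omega

theorem complementaryPair_subset_Icc (hk : k < 2 * n) :
    complementaryPair n k ⊆ Icc 1 (4 * n) := by
  intro x hx
  rw [mem_complementaryPair] at hx
  rw [mem_Icc]
  omega

theorem disjoint_complementaryPair {k' : ℕ} (hk : k < 2 * n) (hk' : k' < 2 * n) (hne : k ≠ k') :
    Disjoint (complementaryPair n k) (complementaryPair n k') := by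
  rw [disjoint_left]
  intro x hx hx'
  rw [mem_complementaryPair] at hx hx'
  omega

theorem card_complementaryPairs : (complementaryPairs n).card = 2 * n := by
  rw [complementaryPairs, Finset.card_image_of_injOn, card_range]
  intro k hk k' hk' h
  by_contra hne
  have := disjoint_complementaryPair (mem_range.mp hk) (mem_range.mp hk') hne
  rw [h, disjoint_self_iff_empty] at this
  simp [complementaryPair] at this

theorem biUnion_complementaryPairs : (complementaryPairs n).biUnion id = Icc 1 (4 * n) := by
  ext x
  simp only [complementaryPairs, image_biUnion, mem_biUnion, mem_range, id_eq,
    mem_complementaryPair, mem_Icc]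
  constructor
  · rintro ⟨k, hk, rfl | rfl⟩ <;> omega
  · intro hx
    by_cases h : x ≤ 2 * n
    · exact ⟨x - 1, by omega, by omega⟩
    · exact ⟨4 * n - x, by omega, by omega⟩

end ComplementaryPairs

theorem isBalancedCompanionFamilySet_of_isPairing {t : ℕ} {F : Finset (Finset (Finset ℕ))}
    (hF : IsPairing (complementaryPairs (t + 1)) F) : IsBalancedCompanionFamilySet t F := by
  have hmem : ∀ P ∈ F, ∀ A ∈ P, ∃ k < 2 * (t + 1), complementaryPair (t + 1) k = A :=
    fun P hP A hA => by simpa [complementaryPairs] using hF.subset hP hA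
  refine ⟨?_, hF.1, ?_, ?_, ?_, ?_⟩
  · have := hF.two_mul_card
    rw [card_complementaryPairs] at this
    omega
  · intro P hP A hA
    obtain ⟨k, hk, rfl⟩ := hmem P hP A hA
    exact ⟨complementaryPair_subset_Icc hk, card_complementaryPair⟩
  · intro P hP P' hP' A hA A' hA' hne
    obtain ⟨k, hk, rfl⟩ := hmem P hP A hA
    obtain ⟨k', hk', rfl⟩ := hmem P' hP' A' hA'
    exact disjoint_complementaryPair hk hk' (by rintro rfl; exact hne rfl)
  · rw [← biUnion_biUnion]
    change (F.biUnion id).biUnion id = _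
    rw [hF.2.2, biUnion_complementaryPairs]
  · intro P hP A hA A' hA'
    obtain ⟨k, hk, rfl⟩ := hmem P hP A hA
    obtain ⟨k', hk', rfl⟩ := hmem P hP A' hA'
    rw [sum_complementaryPair hk, sum_complementaryPair hk']

theorem setOf_isBalancedCompanionFamilySet_finite (t : ℕ) :
    {F | IsBalancedCompanionFamilySet t F}.Finite :=
  (Icc 1 (4 * (t + 1))).powerset.powerset.powerset.finite_toSet.subset fun _ hF =>
    mem_coe.mpr <| mem_powerset.mpr fun P hP =>
      mem_powerset.mpr fun A hA => mem_powerset.mpr (hF.2.2.1 P hP A hA).1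

theorem count_balanced_companion_families_lower_bound_general (t : ℕ) :
    (2*(t+1)).factorial / ((t+1).factorial * 2 ^ (t+1)) ≤
      {F : Finset (Finset (Finset ℕ)) | IsBalancedCompanionFamilySet t F}.ncard := by
  calc (2 * (t + 1))! / ((t + 1)! * 2 ^ (t + 1)) = (2 * (t + 1) - 1)‼ := factorial_two_mul_div _
    _ ≤ (pairings (complementaryPairs (t + 1))).card :=
        doubleFactorial_le_card_pairings _ _ card_complementaryPairs
    _ = (pairings (complementaryPairs (t + 1)) : Set (Finset (Finset (Finset ℕ)))).ncard :=
        (Set.ncard_coe_finset _).symm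
    _ ≤ _ := Set.ncard_le_ncard
        (fun F hF => isBalancedCompanionFamilySet_of_isPairing (mem_pairings.mp hF))
        (setOf_isBalancedCompanionFamilySet_finite t)

/-- The number of balanced companion families on `{1,…,4(t+1)}`, counted as unordered
sets of unordered companion pairs, is at least `(2(t+1))! / ((t+1)! · 2^(t+1))`. -/
theorem count_balanced_companion_families_lower_bound (t : ℕ) (ht : 0 < t) :
    (2*(t+1)).factorial / ((t+1).factorial * 2 ^ (t+1)) ≤
      {F : Finset (Finset (Finset ℕ)) | IsBalancedCompanionFamilySet t F}.ncard :=
  count_balanced_companion_families_lower_bound_general t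
end

section
/- For every positive integer t and every balanced companion family S₁, …, S_{2t+2} on {1,…,4(t+1)}, there exists a collection of popularity swaps of magnitude 1, i.e., a permutation π of {1,…,4(t+1)} with π∘π = id and |π(i) − i| ≤ 1 for all i, such that Σ_{i=1}^{t+1} |Σ_{x∈S_{2i−1}} π(x) − Σ_{x∈S_{2i}} π(x)| ≥ (2/3)(t + 2/3). Equivalently, the worst-case total set discrepancy under magnitude-1 swaps of any balanced companion family is at least (2/3)(t + 2/3). -/
/-- An (indexed) balanced companion family on `{1,…,4(t+1)}`: pairwise disjoint
2-element subsets `S 1, …, S (2t+2)` of `{1,…,4(t+1)}` whose union is all of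
`{1,…,4(t+1)}`, such that for each `i = 1,…,t+1` the companion sets `S (2i-1)`
and `S (2i)` have equal element sums. -/
def IsBalancedCompanionFamily (t : ℕ) (S : ℕ → Finset ℕ) : Prop :=
  (∀ i ∈ Finset.Icc 1 (2*t+2), S i ⊆ Finset.Icc 1 (4*(t+1)) ∧ (S i).card = 2) ∧
  (∀ i ∈ Finset.Icc 1 (2*t+2), ∀ j ∈ Finset.Icc 1 (2*t+2),
    i ≠ j → Disjoint (S i) (S j)) ∧
  (Finset.Icc 1 (2*t+2)).biUnion S = Finset.Icc 1 (4*(t+1)) ∧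
  ∀ i ∈ Finset.Icc 1 (t+1), (S (2*i-1)).sum id = (S (2*i)).sum id

/-- A collection of popularity swaps of magnitude `p` on `{1,…,v}`: a permutation
`π` of `{1,…,v}` with `π ∘ π = id` and `|π i − i| ≤ p` for every `i ∈ {1,…,v}`. -/
def IsSwapCollection (v p : ℕ) (π : ℕ → ℕ) : Prop :=
  (∀ i ∈ Finset.Icc 1 v, π i ∈ Finset.Icc 1 v) ∧
  (∀ i ∈ Finset.Icc 1 v, π (π i) = i) ∧
  (∀ i ∈ Finset.Icc 1 v, |(π i : ℤ) - (i : ℤ)| ≤ (p : ℤ))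

/-- The total set discrepancy of the family `S` under the swap collection `π`:
`∑_{i=1}^{t+1} |∑_{x ∈ S (2i-1)} π x − ∑_{x ∈ S (2i)} π x|`. -/
def totalSetDiscrepancy (t : ℕ) (S : ℕ → Finset ℕ) (π : ℕ → ℕ) : ℤ :=
  ∑ i ∈ Finset.Icc 1 (t+1),
    |((S (2*i-1)).sum fun x => (π x : ℤ)) - ((S (2*i)).sum fun x => (π x : ℤ))|

/-!
Restrict to swapping dominoes `{2j-1, 2j}`. Swapping the dominoes in `X` turns the discrepancy
of the `i`-th companion pair into `|∑ j ∈ X, c i j|` for an integer matrix `c`. Every row of `c`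
is nonzero, since otherwise both companion sets would be dominoes with equal sums, hence equal;
and every column has at most two nonzero entries, since a domino meets at most two companion
pairs. For such a matrix some set `X` of columns makes at least two thirds of the row sums
nonzero: peel off a row with a private column, an isolated pair of rows, or three rows linked
by two columns, and repair each block by toggling columns, which leaves the other rows alone.
Each nonzero row sum contributes at least `1`, so the discrepancy is at least `2(t+1)/3`.
-/

open Finset

section RowSums

variable {ι α M : Type*} [AddCommGroup M]

lemma exists_sum_ne_zero_of_ne_zero [DecidableEq α] {X V : Finset α} {v : α} {g : α → M}
    (hXV : X ⊆ V) (hv : v ∈ V) (hgv : g v ≠ 0) :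
    ∃ X' ⊆ V, ∑ u ∈ X', g u ≠ 0 ∧ ∀ h : α → M, h v = 0 → ∑ u ∈ X', h u = ∑ u ∈ X, h u := by
  by_cases hX : ∑ u ∈ X, g u = 0
  · by_cases hvX : v ∈ X
    · refine ⟨X.erase v, (erase_subset v X).trans hXV, fun h0 => hgv ?_, fun h hv => ?_⟩
      · rwa [← sum_erase_add X g hvX, h0, zero_add] at hX
      · rw [← sum_erase_add X h hvX, hv, add_zero]
    · refine ⟨insert v X, insert_subset hv hXV, ?_, fun h hv => ?_⟩
      · rwa [sum_insert hvX, hX, add_zero]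
      · rw [sum_insert hvX, hv, zero_add]
  · exact ⟨X, hXV, hX, fun _ _ => rfl⟩

variable [DecidableEq M]

lemma eq_zero_of_card_filter_ne_zero_le_two {I : Finset ι} {g : ι → M}
    (hg : #{i ∈ I | g i ≠ 0} ≤ 2) {a b c : ι} (ha : a ∈ I) (hb : b ∈ I) (hc : c ∈ I)
    (hab : a ≠ b) (hga : g a ≠ 0) (hgb : g b ≠ 0) (hca : c ≠ a) (hcb : c ≠ b) : g c = 0 := by
  by_contra hgc
  refine hg.not_gt (two_lt_card.2 ⟨a, ?_, b, ?_, c, ?_, hab, hca.symm, hcb.symm⟩) <;>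
    simp [*]

variable [DecidableEq ι]

def IsRepairable (f : ι → α → M) (V : Finset α) (I R : Finset ι) : Prop :=
  ∀ X ⊆ V, ∃ X' ⊆ V, (∀ i ∈ I \ R, ∑ v ∈ X', f i v = ∑ v ∈ X, f i v) ∧
    2 * #R ≤ 3 * #{i ∈ R | ∑ v ∈ X', f i v ≠ 0}

variable {f : ι → α → M} {V : Finset α} {I : Finset ι}

lemma IsRepairable.exists_of_sdiff {R : Finset ι} (hR : IsRepairable f V I R) (hRI : R ⊆ I)
    (hrest : ∃ X ⊆ V, 2 * #(I \ R) ≤ 3 * #{i ∈ I \ R | ∑ v ∈ X, f i v ≠ 0}) :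
    ∃ X ⊆ V, 2 * #I ≤ 3 * #{i ∈ I | ∑ v ∈ X, f i v ≠ 0} := by
  obtain ⟨X, hXV, hX⟩ := hrest
  obtain ⟨X', hX'V, hout, hin⟩ := hR X hXV
  refine ⟨X', hX'V, ?_⟩
  have hrest' : {i ∈ I \ R | ∑ v ∈ X', f i v ≠ 0} = {i ∈ I \ R | ∑ v ∈ X, f i v ≠ 0} :=
    filter_congr fun i hi => by rw [hout i hi]
  have hsplit : #{i ∈ I | ∑ v ∈ X', f i v ≠ 0} =
      #{i ∈ R | ∑ v ∈ X', f i v ≠ 0} + #{i ∈ I \ R | ∑ v ∈ X', f i v ≠ 0} := by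
    conv_lhs => rw [← union_sdiff_of_subset hRI]
    rw [filter_union, card_union_of_disjoint (disjoint_filter_filter disjoint_sdiff)]
  have hcard := card_sdiff_add_card_eq_card hRI
  rw [hrest'] at hsplit
  omega

variable [DecidableEq α]

lemma isRepairable_singleton {i : ι} {v : α} (hv : v ∈ V) (hfv : f i v ≠ 0)
    (hpriv : ∀ j ∈ I, j ≠ i → f j v = 0) : IsRepairable f V I {i} := by
  intro X hXV
  obtain ⟨X', hX'V, hi, hkeep⟩ := exists_sum_ne_zero_of_ne_zero hXV hv hfv
  refine ⟨X', hX'V, fun j hj => ?_, by simp [filter_singleton, hi]⟩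
  rw [mem_sdiff, mem_singleton] at hj
  exact hkeep _ (hpriv j hj.1 hj.2)

/-- Toggling `vb` repairs row `b`; toggling `va` then repairs row `a` without spoiling `b`. -/
lemma isRepairable_triple {s a b : ι} {va vb : α} (hva : va ∈ V) (hvb : vb ∈ V) (hab : a ≠ b)
    (hfa : f a va ≠ 0) (hfb : f b vb ≠ 0) (hba : f b va = 0)
    (hva_out : ∀ i ∈ I, i ≠ s → i ≠ a → i ≠ b → f i va = 0)
    (hvb_out : ∀ i ∈ I, i ≠ s → i ≠ a → i ≠ b → f i vb = 0) :
    IsRepairable f V I {s, a, b} := by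
  intro X hXV
  obtain ⟨X₁, hX₁V, hb₁, hkeep₁⟩ := exists_sum_ne_zero_of_ne_zero hXV hvb hfb
  obtain ⟨X₂, hX₂V, ha₂, hkeep₂⟩ := exists_sum_ne_zero_of_ne_zero hX₁V hva hfa
  refine ⟨X₂, hX₂V, fun i hi => ?_, ?_⟩
  · simp only [mem_sdiff, mem_insert, mem_singleton, not_or] at hi
    obtain ⟨hiI, his, hia, hib⟩ := hi
    rw [hkeep₂ _ (hva_out i hiI his hia hib), hkeep₁ _ (hvb_out i hiI his hia hib)]
  · have hsat : {a, b} ⊆ ({i ∈ {s, a, b} | ∑ v ∈ X₂, f i v ≠ 0} : Finset ι) := by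
      intro i hi
      rw [mem_insert, mem_singleton] at hi
      rcases hi with rfl | rfl
      · simp [ha₂]
      · simp [hkeep₂ _ hba, hb₁]
    have := card_le_card hsat
    rw [card_pair hab] at this
    have := card_le_three (a := s) (b := a) (c := b)
    omega

/-- Rows `i₀`, `i₁` only share columns with each other, so `v₀` alone can serve both. -/
lemma isRepairable_pair {i₀ i₁ : ι} {v₀ : α} (hv₀ : v₀ ∈ V) (hf₀ : f i₀ v₀ ≠ 0)
    (hf₁ : f i₁ v₀ ≠ 0)
    (hiso : ∀ v ∈ V, f i₀ v ≠ 0 ∨ f i₁ v ≠ 0 → ∀ i ∈ I, i ≠ i₀ → i ≠ i₁ → f i v = 0) :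
    IsRepairable f V I {i₀, i₁} := by
  intro X hXV
  set X' := insert v₀ {v ∈ X | f i₀ v = 0 ∧ f i₁ v = 0}
  have hv₀X' : v₀ ∉ {v ∈ X | f i₀ v = 0 ∧ f i₁ v = 0} := by simp [hf₀]
  have hsum_mem : ∀ i ∈ ({i₀, i₁} : Finset ι), ∑ v ∈ X', f i v = f i v₀ := by
    intro i hi
    rw [sum_insert hv₀X', add_eq_left]
    refine sum_eq_zero fun v hv => ?_
    rw [mem_filter] at hv
    rcases mem_insert.1 hi with rfl | hi
    · exact hv.2.1
    · rw [mem_singleton.1 hi]; exact hv.2.2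
  refine ⟨X', insert_subset hv₀ ((filter_subset _ X).trans hXV), fun i hi => ?_, ?_⟩
  · simp only [mem_sdiff, mem_insert, mem_singleton, not_or] at hi
    obtain ⟨hiI, hi₀, hi₁⟩ := hi
    have hzero : ∀ v ∈ X, f i v ≠ 0 → f i₀ v = 0 ∧ f i₁ v = 0 := fun v hv hfv => by
      by_contra h
      exact hfv (hiso v (hXV hv) (not_and_or.1 h) i hiI hi₀ hi₁)
    rw [sum_insert hv₀X', hiso v₀ hv₀ (Or.inl hf₀) i hiI hi₀ hi₁, zero_add,
      sum_filter_of_ne hzero]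
  · rw [filter_true_of_mem fun i hi => ?_]
    · omega
    rw [hsum_mem i hi]
    rcases mem_insert.1 hi with rfl | hi
    · exact hf₀
    · rw [mem_singleton.1 hi]; exact hf₁

lemma exists_isRepairable (hne : ∀ i ∈ I, ∃ v ∈ V, f i v ≠ 0)
    (hdeg : ∀ v ∈ V, #{i ∈ I | f i v ≠ 0} ≤ 2) (hI : I.Nonempty) :
    ∃ R ⊆ I, R.Nonempty ∧ IsRepairable f V I R := by
  obtain ⟨i₀, hi₀⟩ := hI
  obtain ⟨v₀, hv₀, hf₀⟩ := hne i₀ hi₀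
  by_cases hpriv : ∀ j ∈ I, j ≠ i₀ → f j v₀ = 0
  · exact ⟨{i₀}, singleton_subset_iff.2 hi₀, singleton_nonempty i₀,
      isRepairable_singleton hv₀ hf₀ hpriv⟩
  push Not at hpriv
  obtain ⟨i₁, hi₁, hi₁₀, hf₁⟩ := hpriv
  have hv₀_out : ∀ i ∈ I, i ≠ i₀ → i ≠ i₁ → f i v₀ = 0 := fun i hi =>
    eq_zero_of_card_filter_ne_zero_le_two (hdeg v₀ hv₀) hi₀ hi₁ hi hi₁₀.symm hf₀ hf₁
  by_cases hiso : ∀ v ∈ V, f i₀ v ≠ 0 ∨ f i₁ v ≠ 0 → ∀ i ∈ I, i ≠ i₀ → i ≠ i₁ → f i v = 0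
  · exact ⟨{i₀, i₁}, insert_subset hi₀ (singleton_subset_iff.2 hi₁), insert_nonempty _ _,
      isRepairable_pair hv₀ hf₀ hf₁ hiso⟩
  push Not at hiso
  obtain ⟨v, hv, hv₀₁, i₂, hi₂, hi₂₀, hi₂₁, hf₂⟩ := hiso
  have hsub : {i₀, i₁, i₂} ⊆ I := by
    intro i hi
    simp only [mem_insert, mem_singleton] at hi
    rcases hi with rfl | rfl | rfl <;> assumption
  rcases hv₀₁ with h₀ | h₁
  · refine ⟨{i₀, i₁, i₂}, hsub, insert_nonempty _ _,
      isRepairable_triple hv₀ hv hi₂₁.symm hf₁ hf₂ (hv₀_out i₂ hi₂ hi₂₀ hi₂₁)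
        (fun i hi hi₀' hi₁' _ => hv₀_out i hi hi₀' hi₁') ?_⟩
    exact fun i hi hi₀' _ hi₂' =>
      eq_zero_of_card_filter_ne_zero_le_two (hdeg v hv) hi₀ hi₂ hi hi₂₀.symm h₀ hf₂ hi₀' hi₂'
  · refine ⟨{i₁, i₀, i₂}, ?_, insert_nonempty _ _,
      isRepairable_triple hv₀ hv hi₂₀.symm hf₀ hf₂ (hv₀_out i₂ hi₂ hi₂₀ hi₂₁)
        (fun i hi hi₁' hi₀' _ => hv₀_out i hi hi₀' hi₁') ?_⟩
    · rw [insert_comm]; exact hsub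
    exact fun i hi hi₁' _ hi₂' =>
      eq_zero_of_card_filter_ne_zero_le_two (hdeg v hv) hi₁ hi₂ hi hi₂₁.symm h₁ hf₂ hi₁' hi₂'

theorem exists_subset_two_mul_card_le_three_mul_card_sum_ne_zero
    (hne : ∀ i ∈ I, ∃ v ∈ V, f i v ≠ 0) (hdeg : ∀ v ∈ V, #{i ∈ I | f i v ≠ 0} ≤ 2) :
    ∃ X ⊆ V, 2 * #I ≤ 3 * #{i ∈ I | ∑ v ∈ X, f i v ≠ 0} := by
  induction I using Finset.strongInduction with
  | H I ih =>
  obtain rfl | hI := I.eq_empty_or_nonempty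
  · exact ⟨∅, empty_subset V, by simp⟩
  obtain ⟨R, hRI, hR, hrep⟩ := exists_isRepairable hne hdeg hI
  exact hrep.exists_of_sdiff hRI (ih _ (sdiff_ssubset hRI hR) (fun i hi => hne i (sdiff_subset hi))
    fun v hv => (card_le_card (filter_subset_filter _ sdiff_subset)).trans (hdeg v hv))

end RowSums

/-- Swaps the dominoes `{2j-1, 2j}` with `j ∈ X`; the domino of `x ≥ 1` is `(x+1)/2`. -/
def dominoSwap (X : Finset ℕ) (x : ℕ) : ℕ :=
  if (x + 1) / 2 ∈ X then (if x % 2 = 1 then x + 1 else x - 1) else x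

def dominoImbalance (T : Finset ℕ) (j : ℕ) : ℤ :=
  (if 2 * j - 1 ∈ T then 1 else 0) - (if 2 * j ∈ T then 1 else 0)

def companionImbalance (S : ℕ → Finset ℕ) (i j : ℕ) : ℤ :=
  dominoImbalance (S (2 * i - 1)) j - dominoImbalance (S (2 * i)) j

lemma isSwapCollection_dominoSwap {v : ℕ} (hv : Even v) (X : Finset ℕ) :
    IsSwapCollection v 1 (dominoSwap X) := by
  obtain ⟨k, rfl⟩ := hv
  refine ⟨fun x hx => ?_, fun x hx => ?_, fun x hx => ?_⟩ <;> rw [mem_Icc] at hx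
  · rw [mem_Icc]; unfold dominoSwap; split_ifs <;> omega
  · unfold dominoSwap
    by_cases hx2 : x % 2 = 1
    · by_cases hX : (x + 1) / 2 ∈ X
      · have : (x + 1 + 1) / 2 = (x + 1) / 2 := by omega
        rw [if_pos hX, if_pos hx2, this, if_pos hX, if_neg (by omega)]; omega
      · simp [hX]
    · by_cases hX : (x + 1) / 2 ∈ X
      · have : (x - 1 + 1) / 2 = (x + 1) / 2 := by omega
        rw [if_pos hX, if_neg hx2, this, if_pos hX, if_pos (by omega)]; omega
      · simp [hX]
  · unfold dominoSwap; rw [abs_le]; split_ifs <;> omega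

lemma dominoSwap_sub_self (X : Finset ℕ) (x : ℕ) :
    (dominoSwap X x : ℤ) - x =
      ∑ j ∈ X, ((if x = 2 * j - 1 then 1 else 0) - (if x = 2 * j then 1 else 0)) := by
  by_cases hX : (x + 1) / 2 ∈ X
  · rw [sum_eq_single_of_mem _ hX fun j _ hj => by split_ifs <;> omega]
    unfold dominoSwap
    rw [if_pos hX]
    split_ifs <;> omega
  · rw [sum_eq_zero fun j hj => by
      have : j ≠ (x + 1) / 2 := fun h => hX (h ▸ hj)
      split_ifs <;> omega]
    simp [dominoSwap, hX]

lemma sum_dominoSwap (X T : Finset ℕ) :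
    ∑ x ∈ T, (dominoSwap X x : ℤ) = ∑ x ∈ T, (x : ℤ) + ∑ j ∈ X, dominoImbalance T j := by
  have himb : ∀ j, dominoImbalance T j =
      ∑ x ∈ T, ((if x = 2 * j - 1 then 1 else 0) - (if x = 2 * j then 1 else 0)) := fun j => by
    rw [sum_sub_distrib, sum_ite_eq', sum_ite_eq']; rfl
  simp_rw [himb]
  rw [sum_comm, ← sum_add_distrib]
  exact sum_congr rfl fun x _ => by rw [← dominoSwap_sub_self]; ring

lemma mem_and_mem_of_dominoImbalance_eq {A B : Finset ℕ} (hAB : Disjoint A B) {p : ℕ}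
    (h : dominoImbalance A p = dominoImbalance B p) (hp : 2 * p - 1 ∈ A ∨ 2 * p ∈ A) :
    2 * p - 1 ∈ A ∧ 2 * p ∈ A := by
  have h₁ : 2 * p - 1 ∈ A → 2 * p - 1 ∉ B := fun h => disjoint_left.1 hAB h
  have h₂ : 2 * p ∈ A → 2 * p ∉ B := fun h => disjoint_left.1 hAB h
  unfold dominoImbalance at h
  split_ifs at h <;> simp_all

lemma eq_domino_of_dominoImbalance_eq {A B : Finset ℕ} (hA : #A = 2) (hA₀ : 0 ∉ A)
    (hAB : Disjoint A B)
    (h : ∀ a ∈ A, dominoImbalance A ((a + 1) / 2) = dominoImbalance B ((a + 1) / 2)) :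
    ∃ p ≥ 1, A = {2 * p - 1, 2 * p} := by
  obtain ⟨a, ha⟩ := card_pos.1 (hA ▸ two_pos)
  have ha₀ : a ≠ 0 := fun h => hA₀ (h ▸ ha)
  have hmem := mem_and_mem_of_dominoImbalance_eq hAB (h a ha) (by
    rcases (by omega : a = 2 * ((a + 1) / 2) - 1 ∨ a = 2 * ((a + 1) / 2)) with h | h
    exacts [Or.inl (h ▸ ha), Or.inr (h ▸ ha)])
  refine ⟨(a + 1) / 2, by omega, (eq_of_subset_of_card_le ?_ ?_).symm⟩
  · exact insert_subset hmem.1 (singleton_subset_iff.2 hmem.2)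
  · rw [hA, card_pair (by omega)]

lemma exists_companionImbalance_ne_zero {t : ℕ} {S : ℕ → Finset ℕ}
    (hS : IsBalancedCompanionFamily t S) :
    ∀ i ∈ Icc 1 (t + 1), ∃ j ∈ Icc 1 (2 * t + 2), companionImbalance S i j ≠ 0 := by
  obtain ⟨hsub, hdisj, -, hsum⟩ := hS
  intro i hi
  have hi' := mem_Icc.1 hi
  have hm₁ : 2 * i - 1 ∈ Icc 1 (2 * t + 2) := mem_Icc.2 (by omega)
  have hm₂ : 2 * i ∈ Icc 1 (2 * t + 2) := mem_Icc.2 (by omega)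
  have hAB := hdisj _ hm₁ _ hm₂ (by omega)
  by_contra! h
  have hdomino : ∀ {A B : Finset ℕ}, A ⊆ Icc 1 (4 * (t + 1)) → #A = 2 → Disjoint A B →
      (∀ j ∈ Icc 1 (2 * t + 2), dominoImbalance A j = dominoImbalance B j) →
      ∃ p ≥ 1, A = {2 * p - 1, 2 * p} := fun hA hA₂ hAB h =>
    eq_domino_of_dominoImbalance_eq hA₂ (fun h₀ => by simpa using hA h₀) hAB fun a ha =>
      h _ (by have := mem_Icc.1 (hA ha); exact mem_Icc.2 (by omega))
  obtain ⟨p, hp, hA⟩ := hdomino (hsub _ hm₁).1 (hsub _ hm₁).2 hAB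
    fun j hj => sub_eq_zero.1 (h j hj)
  obtain ⟨q, hq, hB⟩ := hdomino (hsub _ hm₂).1 (hsub _ hm₂).2 hAB.symm
    fun j hj => (sub_eq_zero.1 (h j hj)).symm
  have hpq : p = q := by
    have := hsum i hi
    rw [hA, hB, sum_pair (by omega), sum_pair (by omega)] at this
    simp only [id] at this
    omega
  rw [hA, hB, hpq, disjoint_self] at hAB
  exact insert_ne_empty _ _ hAB

lemma card_filter_companionImbalance_ne_zero_le_two {t : ℕ} {S : ℕ → Finset ℕ}
    (hdisj : ∀ i ∈ Icc 1 (2 * t + 2), ∀ j ∈ Icc 1 (2 * t + 2), i ≠ j → Disjoint (S i) (S j))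
    (j : ℕ) : #{i ∈ Icc 1 (t + 1) | companionImbalance S i j ≠ 0} ≤ 2 := by
  set P : ℕ → Finset ℕ := fun i => S (2 * i - 1) ∪ S (2 * i)
  have hP : (Icc 1 (t + 1) : Set ℕ).PairwiseDisjoint P := by
    intro i hi i' hi' hii'
    simp only [coe_Icc, Set.mem_Icc] at hi hi'
    have hd : ∀ a b, a ∈ ({2 * i - 1, 2 * i} : Finset ℕ) →
        b ∈ ({2 * i' - 1, 2 * i'} : Finset ℕ) → Disjoint (S a) (S b) := fun a b ha hb => by
      simp only [mem_insert, mem_singleton] at ha hb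
      exact hdisj a (mem_Icc.2 (by omega)) b (mem_Icc.2 (by omega)) (by omega)
    simp only [P, disjoint_union_left, disjoint_union_right]
    refine ⟨⟨hd _ _ ?_ ?_, hd _ _ ?_ ?_⟩, hd _ _ ?_ ?_, hd _ _ ?_ ?_⟩ <;> simp
  have hle_one : ∀ x, #{i ∈ Icc 1 (t + 1) | x ∈ P i} ≤ 1 := fun x =>
    card_le_one.2 fun a ha b hb => by
      rw [mem_filter] at ha hb
      exact hP.elim_finset ha.1 hb.1 x ha.2 hb.2
  have hsub : {i ∈ Icc 1 (t + 1) | companionImbalance S i j ≠ 0} ⊆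
      {i ∈ Icc 1 (t + 1) | 2 * j - 1 ∈ P i} ∪ {i ∈ Icc 1 (t + 1) | 2 * j ∈ P i} := by
    intro i hi
    simp only [mem_union, mem_filter] at hi ⊢
    by_contra! hc
    refine hi.2 ?_
    simp_all [P, companionImbalance, dominoImbalance]
  calc _ ≤ _ := card_le_card hsub
    _ ≤ _ := card_union_le _ _
    _ ≤ 2 := add_le_add (hle_one _) (hle_one _)

lemma totalSetDiscrepancy_dominoSwap {t : ℕ} {S : ℕ → Finset ℕ}
    (hsum : ∀ i ∈ Icc 1 (t + 1), (S (2 * i - 1)).sum id = (S (2 * i)).sum id) (X : Finset ℕ) :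
    totalSetDiscrepancy t S (dominoSwap X) =
      ∑ i ∈ Icc 1 (t + 1), |∑ j ∈ X, companionImbalance S i j| := by
  refine sum_congr rfl fun i hi => ?_
  have hsumℤ : ∑ x ∈ S (2 * i - 1), (x : ℤ) = ∑ x ∈ S (2 * i), (x : ℤ) := by
    simpa using congrArg (Nat.cast : ℕ → ℤ) (hsum i hi)
  rw [sum_dominoSwap, sum_dominoSwap, hsumℤ, add_sub_add_left_eq_sub, ← sum_sub_distrib]
  rfl

lemma card_filter_ne_zero_le_sum_abs {ι : Type*} (s : Finset ι) (g : ι → ℤ) :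
    (#{i ∈ s | g i ≠ 0} : ℤ) ≤ ∑ i ∈ s, |g i| := by
  calc (#{i ∈ s | g i ≠ 0} : ℤ) = #{i ∈ s | g i ≠ 0} • (1 : ℤ) := by simp
    _ ≤ ∑ i ∈ s with g i ≠ 0, |g i| :=
      card_nsmul_le_sum _ _ _ fun i hi => Int.one_le_abs (mem_filter.1 hi).2
    _ = ∑ i ∈ s, |g i| := sum_filter_of_ne fun i _ h => by simpa using h

theorem total_set_discrepancy_lower_bound_general (t : ℕ)
    (S : ℕ → Finset ℕ) (hS : IsBalancedCompanionFamily t S) :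
    ∃ π : ℕ → ℕ, IsSwapCollection (4*(t+1)) 1 π ∧
      (2/3 : ℚ) * ((t : ℚ) + 2/3) ≤ (totalSetDiscrepancy t S π : ℚ) := by
  obtain ⟨X, -, hX⟩ := exists_subset_two_mul_card_le_three_mul_card_sum_ne_zero
    (exists_companionImbalance_ne_zero hS)
    fun j _ => card_filter_companionImbalance_ne_zero_le_two hS.2.1 j
  refine ⟨dominoSwap X, isSwapCollection_dominoSwap ⟨2 * (t + 1), by ring⟩ X, ?_⟩
  have hD := card_filter_ne_zero_le_sum_abs (Icc 1 (t + 1))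
    fun i => ∑ j ∈ X, companionImbalance S i j
  rw [← totalSetDiscrepancy_dominoSwap hS.2.2.2] at hD
  rw [Nat.card_Icc, add_tsub_cancel_right] at hX
  have hXℚ : (2 * (t + 1) : ℚ) ≤
      3 * #{i ∈ Icc 1 (t + 1) | ∑ j ∈ X, companionImbalance S i j ≠ 0} := by
    exact_mod_cast hX
  have hDℚ : (#{i ∈ Icc 1 (t + 1) | ∑ j ∈ X, companionImbalance S i j ≠ 0} : ℚ) ≤
      totalSetDiscrepancy t S (dominoSwap X) := by
    exact_mod_cast hD
  linarith

/-- For every balanced companion family on `{1,…,4(t+1)}`, some collection of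
popularity swaps of magnitude 1 produces total set discrepancy at least
`(2/3)(t + 2/3)`. -/
theorem total_set_discrepancy_lower_bound (t : ℕ) (ht : 0 < t)
    (S : ℕ → Finset ℕ) (hS : IsBalancedCompanionFamily t S) :
    ∃ π : ℕ → ℕ, IsSwapCollection (4*(t+1)) 1 π ∧
      (2/3 : ℚ) * ((t : ℚ) + 2/3) ≤ (totalSetDiscrepancy t S π : ℚ) :=
  total_set_discrepancy_lower_bound_general t S hS
end

section
/- For every positive integer t and every balanced companion family S₁, …, S_{2t+2} on {1,…,4(t+1)}, the number of integers s ∈ {1,…,4(t+1)−1} for which s and s+1 lie in two different sets of the family is at least 3(t+1) − 1. -/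
/-- For every balanced companion family on `{1,…,4(t+1)}`, the number of integers
`s ∈ {1,…,4(t+1)−1}` such that `s` and `s+1` lie in two different sets of the
family is at least `3(t+1) − 1`. -/
theorem consecutive_pairs_in_different_sets (t : ℕ) (ht : 0 < t)
    (S : ℕ → Finset ℕ) (hS : IsBalancedCompanionFamily t S) :
    3*(t+1) - 1 ≤ ((Finset.Icc 1 (4*(t+1)-1)).filter fun s =>
      ∃ i ∈ Finset.Icc 1 (2*t+2), ∃ j ∈ Finset.Icc 1 (2*t+2),
        i ≠ j ∧ s ∈ S i ∧ s + 1 ∈ S j).card := by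
  classical
  obtain ⟨hcard, hdisj, hunion, hsum⟩ := hS
  set P : ℕ → Prop := fun s =>
      ∃ i ∈ Finset.Icc 1 (2*t+2), ∃ j ∈ Finset.Icc 1 (2*t+2),
        i ≠ j ∧ s ∈ S i ∧ s + 1 ∈ S j with hPdef
  have hex : ∀ s ∈ Finset.Icc 1 (4*(t+1)), ∃ i ∈ Finset.Icc 1 (2*t+2), s ∈ S i := by
    intro s hs
    rw [← hunion] at hs
    simpa using Finset.mem_biUnion.mp hs
  -- index function
  set idx : ℕ → ℕ := fun s =>
    if h : ∃ i ∈ Finset.Icc 1 (2*t+2), s ∈ S i then h.choose else 0 with hidx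
  have hidxspec : ∀ s ∈ Finset.Icc 1 (4*(t+1)),
      idx s ∈ Finset.Icc 1 (2*t+2) ∧ s ∈ S (idx s) := by
    intro s hs
    have h := hex s hs
    simp only [hidx, dif_pos h]
    exact h.choose_spec
  have hidxuniq : ∀ s, ∀ j ∈ Finset.Icc 1 (2*t+2), s ∈ Finset.Icc 1 (4*(t+1)) →
      s ∈ S j → idx s = j := by
    intro s j hj hs hsj
    obtain ⟨hi, hsi⟩ := hidxspec s hs
    by_contra h
    exact Finset.disjoint_left.mp (hdisj _ hi _ hj h) hsi hsj
  set N := (Finset.Icc 1 (4*(t+1)-1)).filter (fun s => ¬ P s) with hN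
  -- every non-break s gives S (idx s) = {s, s+1}
  have hNset : ∀ s ∈ N, idx s ∈ Finset.Icc 1 (2*t+2) ∧ S (idx s) = {s, s+1} := by
    intro s hsN
    obtain ⟨hs, hnp⟩ := Finset.mem_filter.mp hsN
    have hs1 : s ∈ Finset.Icc 1 (4*(t+1)) := by
      simp only [Finset.mem_Icc] at hs ⊢; omega
    have hs2 : s + 1 ∈ Finset.Icc 1 (4*(t+1)) := by
      simp only [Finset.mem_Icc] at hs ⊢; omega
    obtain ⟨hi, hsi⟩ := hidxspec s hs1
    obtain ⟨hj, hsj⟩ := hidxspec (s+1) hs2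
    have heq : idx s = idx (s+1) := by
      by_contra h
      exact hnp ⟨idx s, hi, idx (s+1), hj, h, hsi, hsj⟩
    have hsub : ({s, s+1} : Finset ℕ) ⊆ S (idx s) := by
      intro x hx
      rcases Finset.mem_insert.mp hx with rfl | hx
      · exact hsi
      · rw [Finset.mem_singleton.mp hx, heq]; exact hsj
    refine ⟨hi, ?_⟩
    have hc2 : ({s, s+1} : Finset ℕ).card = 2 := by
      rw [Finset.card_insert_of_notMem (by simp), Finset.card_singleton]
    exact ((Finset.eq_of_subset_of_card_le hsub (by rw [(hcard _ hi).2, hc2])).symm)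
  -- map to companion index
  have hmaps : ∀ s ∈ N, (idx s + 1) / 2 ∈ Finset.Icc 1 (t+1) := by
    intro s hsN
    have := (hNset s hsN).1
    simp only [Finset.mem_Icc] at this ⊢
    omega
  have hinj : Set.InjOn (fun s => (idx s + 1) / 2) N := by
    intro s hsN s' hs'N hk
    obtain ⟨hi, hSs⟩ := hNset s hsN
    obtain ⟨hi', hSs'⟩ := hNset s' hs'N
    simp only at hk
    by_cases hii : idx s = idx s'
    · -- same set: {s,s+1} = {s',s'+1}
      rw [hii, hSs'] at hSs
      have h1 : s ∈ ({s', s'+1} : Finset ℕ) := by rw [hSs]; simp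
      have h2 : s' ∈ ({s, s+1} : Finset ℕ) := by rw [← hSs]; simp
      simp only [Finset.mem_insert, Finset.mem_singleton] at h1 h2
      omega
    · -- companion sets with equal sums
      set k := (idx s + 1) / 2 with hkdef
      have hk1 : k ∈ Finset.Icc 1 (t+1) := hmaps s hsN
      have hrange : idx s = 2*k - 1 ∨ idx s = 2*k := by
        simp only [Finset.mem_Icc] at hi; omega
      have hrange' : idx s' = 2*k - 1 ∨ idx s' = 2*k := by
        simp only [Finset.mem_Icc] at hi'; omega
      have hsums := hsum k hk1
      have hsum1 : (S (idx s)).sum id = 2*s + 1 := by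
        rw [hSs, Finset.sum_pair (by omega)]; simp; omega
      have hsum2 : (S (idx s')).sum id = 2*s' + 1 := by
        rw [hSs', Finset.sum_pair (by omega)]; simp; omega
      have : (S (idx s)).sum id = (S (idx s')).sum id := by
        rcases hrange with h1 | h1 <;> rcases hrange' with h2 | h2 <;>
          rw [h1, h2] at * <;> omega
      omega
  have hNcard : N.card ≤ t + 1 := by
    have := Finset.card_le_card_of_injOn (fun s => (idx s + 1) / 2) hmaps hinj
    simpa using this
  have hsplit := Finset.card_filter_add_card_filter_not (s := Finset.Icc 1 (4*(t+1)-1)) (p := P)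
  have hIcc : (Finset.Icc 1 (4*(t+1)-1)).card = 4*(t+1) - 1 := by
    rw [Nat.card_Icc]; omega
  rw [hIcc] at hsplit
  rw [hN] at hNcard
  show 3*(t+1) - 1 ≤ ((Finset.Icc 1 (4*(t+1)-1)).filter P).card
  omega
end

section
/- For v = 20 (t = 4), the minimum over all balanced companion families on {1,…,20} of the worst-case total set discrepancy under magnitude-1 swaps equals 8. -/
/-!
Sign the sets so that companions get opposite signs, and let `τ x = ±1` be the sign of the set
containing `x`. For every swap collection `π`, the sum `∑ τ x (π x - x)` is at most the total
discrepancy, with equality for the signing by the signs of the companion differences. That sum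
is also `∑ (τ i - τ (i + 1))` over the swapped pairs `(i, i + 1)`, hence at most twice the
number of descents of `τ` (steps with `τ i = 1`, `τ (i + 1) = -1`), with equality when exactly
the descents are swapped. So the worst
case is twice the largest number of descents over all signings.

Four times the number of descents is `∑ (1 - τ i τ (i + 1)) + τ 1 - τ 20`. Averaged over the
signings, the endpoint terms vanish and every step between different sets contributes at least
`1`; at most five of the nineteen steps stay inside a set, so some signing has at least `14 / 4`,
hence `4`, descents. For the family `extremalFamily` a finite check shows that no signing has
more than four.
-/

open Finset

lemma sum_Icc_two_mul {M : Type*} [AddCommMonoid M] (f : ℕ → M) (m : ℕ) :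
    ∑ k ∈ Icc 1 (2 * m), f k = ∑ i ∈ Icc 1 m, (f (2 * i - 1) + f (2 * i)) := by
  induction m with
  | zero => simp
  | succ m ih =>
    rw [show 2 * (m + 1) = 2 * m + 1 + 1 by ring, sum_Icc_succ_top (by omega),
      sum_Icc_succ_top (by omega), ih, sum_Icc_succ_top (by omega), add_assoc,
      show 2 * (m + 1) - 1 = 2 * m + 1 by omega, show 2 * (m + 1) = 2 * m + 1 + 1 by ring]

lemma eq_pair_of_card_eq_two {s : Finset ℕ} (hs : #s = 2) {a : ℕ} (ha : a ∈ s)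
    (ha' : a + 1 ∈ s) : s = {a, a + 1} :=
  (eq_of_subset_of_card_le (insert_subset ha (singleton_subset_iff.2 ha'))
    (by rw [hs, card_pair (by omega)])).symm

lemma eq_of_succ_mem_of_sum_eq {s s' : Finset ℕ} (hs : #s = 2) (hs' : #s' = 2)
    (hsum : s.sum id = s'.sum id) {a b : ℕ} (ha : a ∈ s) (ha' : a + 1 ∈ s) (hb : b ∈ s')
    (hb' : b + 1 ∈ s') : a = b := by
  rw [eq_pair_of_card_eq_two hs ha ha', eq_pair_of_card_eq_two hs' hb hb',
    sum_pair (by omega), sum_pair (by omega)] at hsum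
  simp only [id] at hsum
  omega

section Swaps

variable {n : ℕ} {π : ℕ → ℕ} {τ : ℕ → ℤ}

def swapStarts (n : ℕ) (π : ℕ → ℕ) : Finset ℕ := (Ico 1 n).filter fun i => π i = i + 1

lemma IsSwapCollection.displacement_eq (hπ : IsSwapCollection n 1 π) {x : ℕ}
    (hx : x ∈ Icc 1 n) :
    (π x : ℤ) - x =
      (if x ∈ swapStarts n π then 1 else 0) - (if x - 1 ∈ swapStarts n π then 1 else 0) := by
  obtain ⟨hmem, hinv, hdist⟩ := hπ
  have hx' := mem_Icc.1 hx
  have hπx := mem_Icc.1 (hmem x hx)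
  have hdx := abs_le.1 (hdist x hx)
  have hback : 2 ≤ x → (π (x - 1) = x - 1 + 1 ↔ π x = x - 1) := fun h2 => by
    have hx1 : x - 1 ∈ Icc 1 n := mem_Icc.2 ⟨by omega, by omega⟩
    rw [Nat.sub_add_cancel (by omega : 1 ≤ x)]
    exact ⟨fun h => by simpa [h] using hinv _ hx1, fun h => by simpa [h] using hinv x hx⟩
  simp only [swapStarts, mem_filter, mem_Ico]
  push_cast at hdx
  split_ifs <;> omega

lemma IsSwapCollection.sum_mul_displacement (hπ : IsSwapCollection n 1 π) (f : ℕ → ℤ) :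
    ∑ x ∈ Icc 1 n, f x * ((π x : ℤ) - x) = ∑ i ∈ swapStarts n π, (f i - f (i + 1)) := by
  have hsub : swapStarts n π ⊆ Icc 1 n := fun i hi => by
    simp only [swapStarts, mem_filter, mem_Ico] at hi; exact mem_Icc.2 ⟨hi.1.1, hi.1.2.le⟩
  rw [sum_congr rfl fun x hx => by rw [hπ.displacement_eq hx]]
  simp only [mul_sub, mul_ite, mul_one, mul_zero, sum_sub_distrib]
  congr 1
  · rw [sum_ite_mem, inter_eq_right.2 hsub]
  · rw [← sum_filter]
    have hpos : ∀ a ∈ (Icc 1 n).filter (fun x => x - 1 ∈ swapStarts n π), a - 1 + 1 = a :=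
      fun a ha => Nat.sub_add_cancel (mem_Icc.1 (mem_filter.1 ha).1).1
    refine sum_nbij' (· - 1) (· + 1) (fun a ha => (mem_filter.1 ha).2) (fun a ha => ?_) hpos
      (fun a _ => Nat.add_sub_cancel a 1) (fun a ha => by rw [hpos a ha])
    rw [mem_filter, Nat.add_sub_cancel, mem_Icc]
    have := mem_Ico.1 (mem_filter.1 ha).1
    exact ⟨⟨by omega, by omega⟩, ha⟩

def descents (n : ℕ) (τ : ℕ → ℤ) : Finset ℕ :=
  (Ico 1 n).filter fun i => τ i = 1 ∧ τ (i + 1) = -1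

/-- Descents are never adjacent, so this is an involution. -/
def descentSwap (n : ℕ) (τ : ℕ → ℤ) (x : ℕ) : ℕ :=
  if x ∈ descents n τ then x + 1 else if x - 1 ∈ descents n τ then x - 1 else x

lemma mem_descents {i : ℕ} :
    i ∈ descents n τ ↔ (1 ≤ i ∧ i < n) ∧ τ i = 1 ∧ τ (i + 1) = -1 := by
  rw [descents, mem_filter, mem_Ico]

lemma descentSwap_cases (x : ℕ) :
    x ∈ descents n τ ∧ descentSwap n τ x = x + 1 ∨
      x ∉ descents n τ ∧ x - 1 ∈ descents n τ ∧ descentSwap n τ x = x - 1 ∨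
      x ∉ descents n τ ∧ x - 1 ∉ descents n τ ∧ descentSwap n τ x = x := by
  unfold descentSwap
  split_ifs <;> simp_all

lemma descentSwap_of_mem {i : ℕ} (hi : i ∈ descents n τ) : descentSwap n τ i = i + 1 :=
  if_pos hi

lemma descentSwap_succ_of_mem {i : ℕ} (hi : i ∈ descents n τ) :
    descentSwap n τ (i + 1) = i := by
  have : i + 1 ∉ descents n τ := fun h => by rw [mem_descents] at hi h; omega
  rw [descentSwap, if_neg this, Nat.add_sub_cancel, if_pos hi]

lemma isSwapCollection_descentSwap : IsSwapCollection n 1 (descentSwap n τ) := by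
  refine ⟨fun x hx => ?_, fun x hx => ?_, fun x hx => ?_⟩ <;>
    rcases descentSwap_cases (n := n) (τ := τ) x with
      ⟨h, hx'⟩ | ⟨-, h, hx'⟩ | ⟨-, -, hx'⟩
  · rw [mem_descents] at h; rw [hx', mem_Icc]; omega
  · rw [mem_descents] at h; rw [hx', mem_Icc]; omega
  · rwa [hx']
  · rw [hx', descentSwap_succ_of_mem h]
  · rw [hx', descentSwap_of_mem h, Nat.sub_add_cancel (mem_Icc.1 hx).1]
  · rw [hx', hx']
  all_goals rw [hx']; norm_num
  rw [Nat.cast_sub (mem_Icc.1 hx).1]; norm_num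

lemma swapStarts_descentSwap : swapStarts n (descentSwap n τ) = descents n τ := by
  ext i
  simp only [swapStarts, mem_filter]
  rcases descentSwap_cases (n := n) (τ := τ) i with ⟨h, hi⟩ | ⟨h, -, hi⟩ | ⟨h, -, hi⟩
  · simp [h, hi, (mem_filter.1 h).1]
  all_goals simp only [hi, h, iff_false]; omega

lemma sum_mul_displacement_descentSwap :
    ∑ x ∈ Icc 1 n, τ x * ((descentSwap n τ x : ℤ) - x) = 2 * #(descents n τ) := by
  rw [isSwapCollection_descentSwap.sum_mul_displacement, swapStarts_descentSwap, mul_comm,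
    ← nsmul_eq_mul, ← sum_const]
  refine sum_congr rfl fun i hi => ?_
  rw [(mem_descents.1 hi).2.1, (mem_descents.1 hi).2.2]
  norm_num

lemma IsSwapCollection.sum_mul_displacement_le (hπ : IsSwapCollection n 1 π)
    (hτ : ∀ x ∈ Icc 1 n, τ x = 1 ∨ τ x = -1) :
    ∑ x ∈ Icc 1 n, τ x * ((π x : ℤ) - x) ≤ 2 * #(descents n τ) := by
  rw [hπ.sum_mul_displacement]
  calc ∑ i ∈ swapStarts n π, (τ i - τ (i + 1))
      ≤ ∑ i ∈ swapStarts n π, if i ∈ descents n τ then 2 else 0 :=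
        sum_le_sum fun i hi => ?_
    _ = ∑ i ∈ swapStarts n π ∩ descents n τ, 2 := sum_ite_mem _ _ _
    _ ≤ ∑ i ∈ descents n τ, 2 := sum_le_sum_of_subset_of_nonneg inter_subset_right (by simp)
    _ = 2 * #(descents n τ) := by rw [sum_const, nsmul_eq_mul, mul_comm]
  have hi' := mem_Ico.1 (mem_filter.1 hi).1
  rcases hτ i (mem_Icc.2 ⟨hi'.1, hi'.2.le⟩) with h | h <;>
    rcases hτ (i + 1) (mem_Icc.2 ⟨by omega, hi'.2⟩) with h' | h' <;>
    simp [mem_descents, h, h', hi'.1, hi'.2]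

lemma four_mul_card_descents (hn : 1 ≤ n) (hτ : ∀ x ∈ Icc 1 n, τ x = 1 ∨ τ x = -1) :
    4 * (#(descents n τ) : ℤ) = ∑ i ∈ Ico 1 n, (1 - τ i * τ (i + 1)) + (τ 1 - τ n) := by
  have htel : ∑ i ∈ Ico 1 n, (τ i - τ (i + 1)) = τ 1 - τ n := by
    rw [← neg_sub, ← sum_Ico_sub τ hn, ← sum_neg_distrib]
    simp only [neg_sub]
  rw [descents, card_filter, Nat.cast_sum, mul_sum, ← htel, ← sum_add_distrib]
  refine sum_congr rfl fun i hi => ?_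
  have hi' := mem_Ico.1 hi
  rcases hτ i (mem_Icc.2 ⟨hi'.1, hi'.2.le⟩) with h | h <;>
    rcases hτ (i + 1) (mem_Icc.2 ⟨by omega, hi'.2⟩) with h' | h' <;>
    simp [h, h']

end Swaps

section Signs

variable {t : ℕ}

def pairIndex (t k : ℕ) : Fin (t + 1) := Fin.ofNat (t + 1) ((k - 1) / 2)

/-- The sign of the `k`-th set when the companion pair `(S (2i-1), S (2i))` is signed
`(σ (i-1), -σ (i-1))`. -/
def labelSign (σ : Fin (t + 1) → Bool) (k : ℕ) : ℤ :=
  (-1) ^ (k + 1) * if σ (pairIndex t k) then 1 else -1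

def flipAt (j : Fin (t + 1)) : Equiv.Perm (Fin (t + 1) → Bool) :=
  Function.Involutive.toPerm (fun σ => Function.update σ j (!σ j)) fun σ => by
    ext i
    by_cases h : i = j
    · subst h; simp
    · simp [Function.update_of_ne h]

lemma flipAt_apply (j : Fin (t + 1)) (σ : Fin (t + 1) → Bool) :
    flipAt j σ = Function.update σ j (!σ j) :=
  rfl

lemma labelSign_eq_one_or_eq_neg_one (σ : Fin (t + 1) → Bool) (k : ℕ) :
    labelSign σ k = 1 ∨ labelSign σ k = -1 := by
  rcases neg_one_pow_eq_or ℤ (k + 1) with h | h <;> unfold labelSign <;> split_ifs <;> simp [h]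

lemma labelSign_two_mul (σ : Fin (t + 1) → Bool) {i : ℕ} (hi : 1 ≤ i) :
    labelSign σ (2 * i) = -labelSign σ (2 * i - 1) := by
  have hblock : pairIndex t (2 * i) = pairIndex t (2 * i - 1) := by
    rw [pairIndex, pairIndex]; congr 1; omega
  rw [labelSign, labelSign, hblock, Nat.sub_add_cancel (by omega), pow_succ]
  ring

lemma labelSign_flipAt (σ : Fin (t + 1) → Bool) (j : Fin (t + 1)) (k : ℕ) :
    labelSign (flipAt j σ) k =
      if pairIndex t k = j then -labelSign σ k else labelSign σ k := by
  rw [labelSign, labelSign, flipAt_apply, Function.update_apply]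
  split_ifs with h h' <;> simp_all

lemma sum_eq_zero_of_flipAt {f : (Fin (t + 1) → Bool) → ℤ} (j : Fin (t + 1))
    (hf : ∀ σ, f (flipAt j σ) = -f σ) : ∑ σ, f σ = 0 := by
  have := Equiv.sum_comp (flipAt j) f
  simp only [hf, sum_neg_distrib] at this
  linarith

lemma sum_labelSign (k : ℕ) : ∑ σ : Fin (t + 1) → Bool, labelSign σ k = 0 :=
  sum_eq_zero_of_flipAt _ fun σ => by rw [labelSign_flipAt, if_pos rfl]

lemma sum_labelSign_mul_labelSign_nonpos {k k' : ℕ} (hk : k ∈ Icc 1 (2 * t + 2))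
    (hk' : k' ∈ Icc 1 (2 * t + 2)) (hne : k ≠ k') :
    ∑ σ : Fin (t + 1) → Bool, labelSign σ k * labelSign σ k' ≤ 0 := by
  rw [mem_Icc] at hk hk'
  by_cases hblock : pairIndex t k = pairIndex t k'
  · refine sum_nonpos fun σ _ => ?_
    rw [pairIndex, pairIndex, Fin.ext_iff, Fin.val_ofNat, Fin.val_ofNat,
      Nat.mod_eq_of_lt (by omega), Nat.mod_eq_of_lt (by omega)] at hblock
    obtain ⟨i, hi, rfl | rfl, rfl | rfl⟩ : ∃ i, 1 ≤ i ∧ (k = 2 * i - 1 ∨ k = 2 * i) ∧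
        (k' = 2 * i - 1 ∨ k' = 2 * i) := ⟨(k + 1) / 2, by omega, by omega, by omega⟩
    all_goals first
      | exact absurd rfl hne
      | rw [labelSign_two_mul σ hi]
        rcases labelSign_eq_one_or_eq_neg_one σ (2 * i - 1) with h | h <;> simp [h]
  · refine le_of_eq (sum_eq_zero_of_flipAt (pairIndex t k) fun σ => ?_)
    rw [labelSign_flipAt, labelSign_flipAt, if_pos rfl, if_neg (Ne.symm hblock), neg_mul]

end Signs

section Family

variable {t : ℕ} {S : ℕ → Finset ℕ}

/-- The sign of the set of the family containing `x`, when the sets are signed by `labelSign σ`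
(for a partition exactly one term of the sum is nonzero). -/
def blockSign (t : ℕ) (S : ℕ → Finset ℕ) (σ : Fin (t + 1) → Bool) (x : ℕ) : ℤ :=
  ∑ k ∈ Icc 1 (2 * t + 2), if x ∈ S k then labelSign σ k else 0

def companionDisplacement (S : ℕ → Finset ℕ) (π : ℕ → ℕ) (i : ℕ) : ℤ :=
  ∑ x ∈ S (2 * i - 1), ((π x : ℤ) - x) - ∑ x ∈ S (2 * i), ((π x : ℤ) - x)

def sameSetSteps (t : ℕ) (S : ℕ → Finset ℕ) : Finset ℕ :=
  (Ico 1 (4 * (t + 1))).filter fun i => ∃ k ∈ Icc 1 (2 * t + 2), i ∈ S k ∧ i + 1 ∈ S k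

namespace IsBalancedCompanionFamily

lemma exists_mem (hS : IsBalancedCompanionFamily t S) {x : ℕ} (hx : x ∈ Icc 1 (4 * (t + 1))) :
    ∃ k ∈ Icc 1 (2 * t + 2), x ∈ S k := by
  rwa [← hS.2.2.1, mem_biUnion] at hx

lemma blockSign_eq (hS : IsBalancedCompanionFamily t S) (σ : Fin (t + 1) → Bool) {k x : ℕ}
    (hk : k ∈ Icc 1 (2 * t + 2)) (hx : x ∈ S k) : blockSign t S σ x = labelSign σ k := by
  rw [blockSign, sum_eq_single_of_mem k hk fun k' hk' hne =>
    if_neg fun hx' => disjoint_left.1 (hS.2.1 k' hk' k hk hne) hx' hx, if_pos hx]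

lemma blockSign_eq_one_or_eq_neg_one (hS : IsBalancedCompanionFamily t S)
    (σ : Fin (t + 1) → Bool) {x : ℕ} (hx : x ∈ Icc 1 (4 * (t + 1))) :
    blockSign t S σ x = 1 ∨ blockSign t S σ x = -1 := by
  obtain ⟨k, hk, hxk⟩ := hS.exists_mem hx
  rw [hS.blockSign_eq σ hk hxk]
  exact labelSign_eq_one_or_eq_neg_one σ k

lemma sum_blockSign_mul_displacement (hS : IsBalancedCompanionFamily t S)
    (σ : Fin (t + 1) → Bool) (π : ℕ → ℕ) :
    ∑ x ∈ Icc 1 (4 * (t + 1)), blockSign t S σ x * ((π x : ℤ) - x) =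
      ∑ i ∈ Icc 1 (t + 1), labelSign σ (2 * i - 1) * companionDisplacement S π i := by
  have hset : ∀ k ∈ Icc 1 (2 * t + 2),
      ∑ x ∈ Icc 1 (4 * (t + 1)),
          (if x ∈ S k then labelSign σ k * ((π x : ℤ) - x) else 0) =
        labelSign σ k * ∑ x ∈ S k, ((π x : ℤ) - x) := fun k hk => by
    rw [sum_ite_mem, inter_eq_right.2 (hS.1 k hk).1, mul_sum]
  simp only [blockSign, sum_mul, ite_mul, zero_mul]
  rw [sum_comm, sum_congr rfl hset, show 2 * t + 2 = 2 * (t + 1) by ring, sum_Icc_two_mul]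
  refine sum_congr rfl fun i hi => ?_
  rw [labelSign_two_mul σ (mem_Icc.1 hi).1, companionDisplacement]
  ring

lemma totalSetDiscrepancy_eq (hS : IsBalancedCompanionFamily t S) (π : ℕ → ℕ) :
    totalSetDiscrepancy t S π = ∑ i ∈ Icc 1 (t + 1), |companionDisplacement S π i| := by
  refine sum_congr rfl fun i hi => congrArg abs ?_
  have hbal := congrArg (Nat.cast : ℕ → ℤ) (hS.2.2.2 i hi)
  push_cast at hbal
  rw [companionDisplacement, sum_sub_distrib, sum_sub_distrib]
  simp only [id] at hbal
  rw [hbal]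
  ring

lemma sum_blockSign_mul_le_totalSetDiscrepancy (hS : IsBalancedCompanionFamily t S)
    (σ : Fin (t + 1) → Bool) (π : ℕ → ℕ) :
    ∑ x ∈ Icc 1 (4 * (t + 1)), blockSign t S σ x * ((π x : ℤ) - x) ≤
      totalSetDiscrepancy t S π := by
  rw [hS.sum_blockSign_mul_displacement, hS.totalSetDiscrepancy_eq]
  refine sum_le_sum fun i _ => ?_
  rcases labelSign_eq_one_or_eq_neg_one σ (2 * i - 1) with h | h <;>
    simp only [h, one_mul, neg_one_mul, le_abs_self, neg_le_abs]

lemma exists_sum_blockSign_mul_eq_totalSetDiscrepancy (hS : IsBalancedCompanionFamily t S)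
    (π : ℕ → ℕ) : ∃ σ : Fin (t + 1) → Bool,
      ∑ x ∈ Icc 1 (4 * (t + 1)), blockSign t S σ x * ((π x : ℤ) - x) =
        totalSetDiscrepancy t S π := by
  refine ⟨fun j => decide (0 ≤ companionDisplacement S π (j + 1)), ?_⟩
  rw [hS.sum_blockSign_mul_displacement, hS.totalSetDiscrepancy_eq]
  refine sum_congr rfl fun i hi => ?_
  have hidx : ((pairIndex t (2 * i - 1) : ℕ) + 1) = i := by
    rw [mem_Icc] at hi
    rw [pairIndex, Fin.val_ofNat, Nat.mod_eq_of_lt (by omega)]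
    omega
  rw [labelSign, hidx, show 2 * i - 1 + 1 = 2 * i by omega, pow_mul]
  by_cases h : 0 ≤ companionDisplacement S π i
  · simp [h, abs_of_nonneg h]
  · simp [h, abs_of_neg (not_le.1 h)]

/-- Two consecutive points fill their set; equal sums then forbid the companion set from being
another consecutive pair, so each companion pair contributes at most one such step. -/
lemma card_sameSetSteps_le (hS : IsBalancedCompanionFamily t S) :
    #(sameSetSteps t S) ≤ t + 1 := by
  classical
  let B : ℕ → Finset ℕ := fun j => (sameSetSteps t S).filter fun i =>
    ∃ k ∈ ({2 * j - 1, 2 * j} : Finset ℕ), i ∈ S k ∧ i + 1 ∈ S k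
  have hcover : sameSetSteps t S ⊆ (Icc 1 (t + 1)).biUnion B := fun i hi => by
    obtain ⟨k, hk, hik, hik'⟩ := (mem_filter.1 hi).2
    have hk' := mem_Icc.1 hk
    refine mem_biUnion.2 ⟨(k + 1) / 2, mem_Icc.2 ⟨by omega, by omega⟩,
      mem_filter.2 ⟨hi, k, ?_, hik, hik'⟩⟩
    rw [mem_insert, mem_singleton]
    omega
  have hB : ∀ j ∈ Icc 1 (t + 1), #(B j) ≤ 1 := fun j hj => card_le_one.2 fun a ha b hb => by
    obtain ⟨k, hk, hak, hak'⟩ := (mem_filter.1 ha).2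
    obtain ⟨k', hk', hbk, hbk'⟩ := (mem_filter.1 hb).2
    have hpair : ∀ l ∈ ({2 * j - 1, 2 * j} : Finset ℕ),
        #(S l) = 2 ∧ (S l).sum id = (S (2 * j - 1)).sum id := fun l hl => by
      have hj' := mem_Icc.1 hj
      rw [mem_insert, mem_singleton] at hl
      rcases hl with rfl | rfl
      · exact ⟨(hS.1 _ (mem_Icc.2 ⟨by omega, by omega⟩)).2, rfl⟩
      · exact ⟨(hS.1 _ (mem_Icc.2 ⟨by omega, by omega⟩)).2, (hS.2.2.2 j hj).symm⟩
    exact eq_of_succ_mem_of_sum_eq (hpair k hk).1 (hpair k' hk').1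
      ((hpair k hk).2.trans (hpair k' hk').2.symm) hak hak' hbk hbk'
  calc #(sameSetSteps t S) ≤ #((Icc 1 (t + 1)).biUnion B) := card_le_card hcover
    _ ≤ #(Icc 1 (t + 1)) * 1 := card_biUnion_le_card_mul _ _ _ hB
    _ = t + 1 := by simp

lemma one_sub_blockSign_mul_nonneg (hS : IsBalancedCompanionFamily t S)
    (σ : Fin (t + 1) → Bool) {i : ℕ} (hi : i ∈ Ico 1 (4 * (t + 1))) :
    0 ≤ 1 - blockSign t S σ i * blockSign t S σ (i + 1) := by
  have hi' := mem_Ico.1 hi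
  rcases hS.blockSign_eq_one_or_eq_neg_one σ (mem_Icc.2 ⟨hi'.1, hi'.2.le⟩) with h | h <;>
    rcases hS.blockSign_eq_one_or_eq_neg_one σ (x := i + 1) (mem_Icc.2 ⟨by omega, hi'.2⟩) with
      h' | h' <;> simp [h, h']

lemma le_sum_one_sub_blockSign_mul (hS : IsBalancedCompanionFamily t S) {i : ℕ}
    (hi : i ∈ Ico 1 (4 * (t + 1))) (hstep : i ∉ sameSetSteps t S) :
    2 ^ (t + 1) ≤
      ∑ σ : Fin (t + 1) → Bool, (1 - blockSign t S σ i * blockSign t S σ (i + 1)) := by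
  have hi' := mem_Ico.1 hi
  obtain ⟨k, hk, hik⟩ := hS.exists_mem (mem_Icc.2 ⟨hi'.1, hi'.2.le⟩)
  obtain ⟨k', hk', hik'⟩ := hS.exists_mem (x := i + 1) (mem_Icc.2 ⟨by omega, hi'.2⟩)
  have hne : k ≠ k' := by
    rintro rfl
    exact hstep (mem_filter.2 ⟨hi, k, hk, hik, hik'⟩)
  simp only [hS.blockSign_eq _ hk hik, hS.blockSign_eq _ hk' hik', sum_sub_distrib, sum_const,
    card_univ, Fintype.card_fun, Fintype.card_bool, Fintype.card_fin, nsmul_eq_mul, mul_one,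
    Nat.cast_pow, Nat.cast_ofNat]
  linarith [sum_labelSign_mul_labelSign_nonpos hk hk' hne]

lemma le_sum_four_mul_card_descents (hS : IsBalancedCompanionFamily t S) :
    2 ^ (t + 1) * (3 * t + 2 : ℤ) ≤
      ∑ σ : Fin (t + 1) → Bool, 4 * (#(descents (4 * (t + 1)) (blockSign t S σ)) : ℤ) := by
  have hend :
      ∀ x ∈ Icc 1 (4 * (t + 1)), ∑ σ : Fin (t + 1) → Bool, blockSign t S σ x = 0 :=
    fun x hx => by
      obtain ⟨k, hk, hxk⟩ := hS.exists_mem hx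
      simp only [hS.blockSign_eq _ hk hxk, sum_labelSign]
  have hcard :
      #(Ico 1 (4 * (t + 1)) \ sameSetSteps t S) + #(sameSetSteps t S) = 4 * (t + 1) - 1 := by
    rw [card_sdiff_add_card_eq_card (s := sameSetSteps t S) (filter_subset _ _), Nat.card_Ico]
  have hsteps := hS.card_sameSetSteps_le
  simp only [four_mul_card_descents (by omega) fun x hx =>
    hS.blockSign_eq_one_or_eq_neg_one _ hx]
  rw [sum_add_distrib, sum_sub_distrib, hend 1 (mem_Icc.2 ⟨le_rfl, by omega⟩),
    hend _ (mem_Icc.2 ⟨by omega, le_rfl⟩), sub_zero, add_zero, sum_comm]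
  calc 2 ^ (t + 1) * (3 * t + 2 : ℤ)
      ≤ ∑ _i ∈ Ico 1 (4 * (t + 1)) \ sameSetSteps t S, 2 ^ (t + 1) := by
        rw [sum_const, nsmul_eq_mul, mul_comm]
        gcongr
        omega
    _ ≤ ∑ i ∈ Ico 1 (4 * (t + 1)) \ sameSetSteps t S,
          ∑ σ : Fin (t + 1) → Bool, (1 - blockSign t S σ i * blockSign t S σ (i + 1)) :=
        sum_le_sum fun i hi =>
          hS.le_sum_one_sub_blockSign_mul (mem_sdiff.1 hi).1 (mem_sdiff.1 hi).2
    _ ≤ _ := sum_le_sum_of_subset_of_nonneg sdiff_subset fun i hi _ =>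
        sum_nonneg fun σ _ => hS.one_sub_blockSign_mul_nonneg σ hi

lemma exists_le_four_mul_card_descents (hS : IsBalancedCompanionFamily t S) :
    ∃ σ : Fin (t + 1) → Bool,
      3 * t + 2 ≤ 4 * #(descents (4 * (t + 1)) (blockSign t S σ)) := by
  have hsum : ∑ _σ : Fin (t + 1) → Bool, (3 * t + 2 : ℤ) ≤
      ∑ σ : Fin (t + 1) → Bool, 4 * (#(descents (4 * (t + 1)) (blockSign t S σ)) : ℤ) := by
    refine le_trans (le_of_eq ?_) hS.le_sum_four_mul_card_descents
    simp [mul_comm]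
  obtain ⟨σ, -, hσ⟩ := exists_le_of_sum_le univ_nonempty hsum
  exact ⟨σ, by exact_mod_cast hσ⟩

theorem exists_le_totalSetDiscrepancy (hS : IsBalancedCompanionFamily t S) :
    ∃ π : ℕ → ℕ, IsSwapCollection (4 * (t + 1)) 1 π ∧
      2 * (((3 * t + 5) / 4 : ℕ) : ℤ) ≤ totalSetDiscrepancy t S π := by
  obtain ⟨σ, hσ⟩ := hS.exists_le_four_mul_card_descents
  refine ⟨descentSwap _ (blockSign t S σ), isSwapCollection_descentSwap, ?_⟩
  calc 2 * (((3 * t + 5) / 4 : ℕ) : ℤ)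
      ≤ 2 * #(descents (4 * (t + 1)) (blockSign t S σ)) := by gcongr; omega
    _ = _ := sum_mul_displacement_descentSwap.symm
    _ ≤ _ := hS.sum_blockSign_mul_le_totalSetDiscrepancy σ _

theorem exists_totalSetDiscrepancy_le (hS : IsBalancedCompanionFamily t S) {π : ℕ → ℕ}
    (hπ : IsSwapCollection (4 * (t + 1)) 1 π) :
    ∃ σ : Fin (t + 1) → Bool,
      totalSetDiscrepancy t S π ≤ 2 * #(descents (4 * (t + 1)) (blockSign t S σ)) := by
  obtain ⟨σ, hσ⟩ := hS.exists_sum_blockSign_mul_eq_totalSetDiscrepancy π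
  exact ⟨σ, hσ ▸ hπ.sum_mul_displacement_le fun x hx =>
    hS.blockSign_eq_one_or_eq_neg_one σ hx⟩

end IsBalancedCompanionFamily

end Family

def extremalFamily : ℕ → Finset ℕ
  | 1 => {1, 20} | 2 => {7, 14}
  | 3 => {2, 17} | 4 => {9, 10}
  | 5 => {3, 8} | 6 => {5, 6}
  | 7 => {4, 19} | 8 => {11, 12}
  | 9 => {13, 18} | 10 => {15, 16}
  | _ => ∅

lemma isBalancedCompanionFamily_extremalFamily : IsBalancedCompanionFamily 4 extremalFamily := by
  unfold IsBalancedCompanionFamily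
  decide

lemma card_descents_extremalFamily_le (σ : Fin 5 → Bool) :
    #(descents 20 (blockSign 4 extremalFamily σ)) ≤ 4 := by
  revert σ
  decide

/-- For `v = 20` (`t = 4`), the minimum over all balanced companion families on
`{1,…,20}` of the worst-case total set discrepancy under magnitude-1 swaps
equals 8: every family admits a magnitude-1 swap collection of total set
discrepancy at least 8, and some family has total set discrepancy at most 8
under every magnitude-1 swap collection. -/
theorem v20_min_worstcase_discrepancy_eq_eight :
    (∀ S : ℕ → Finset ℕ, IsBalancedCompanionFamily 4 S →
      ∃ π : ℕ → ℕ, IsSwapCollection 20 1 π ∧ 8 ≤ totalSetDiscrepancy 4 S π) ∧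
    (∃ S : ℕ → Finset ℕ, IsBalancedCompanionFamily 4 S ∧
      ∀ π : ℕ → ℕ, IsSwapCollection 20 1 π → totalSetDiscrepancy 4 S π ≤ 8) := by
  refine ⟨fun S hS => hS.exists_le_totalSetDiscrepancy,
    extremalFamily, isBalancedCompanionFamily_extremalFamily, fun π hπ => ?_⟩
  obtain ⟨σ, hσ⟩ := isBalancedCompanionFamily_extremalFamily.exists_totalSetDiscrepancy_le hπ
  exact hσ.trans (by exact_mod_cast Nat.mul_le_mul_left 2 (card_descents_extremalFamily_le σ))
end

section
/- Let t be a positive integer with t + 1 ≥ 3, let v = 4(t+1), m = ⌊(t+1)/6⌋, and m' = v − 24m (so m' ∈ {0, 4, 8, 12, 16, 20}). Then there exists a balanced companion family on {1,…,v} whose worst-case total set discrepancy under magnitude-1 swaps is at most 12m + Δ, where Δ = −2, 2, 4, 6, 6, 8 according as m' = 0, 4, 8, 12, 16, 20, respectively. -/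
/-!
A magnitude-1 swap collection is a set of disjoint transpositions `(j j+1)`. Writing
`e j ∈ {0, 1}` for the indicator that `(j j+1)` is swapped, `π x = x + e x - e (x - 1)`, so the
discrepancy of a companion pair with equal sums is a signed sum of four jumps of `e`, and `e` has
no two consecutive ones.

The family concatenates `⌊(t+1)/6⌋` copies of a gadget on 24 points with one gadget on
`4 ((t+1) mod 6)` points. On a gadget with `s` pairs, `∑ |D_l|` is the largest of the `2^s`
signed sums `∑ ±D_l`, each a linear form in `e`, and a linear form is maximised over sparse
`0/1` sequences by dynamic programming. Evaluating this bounds the gadget by `B_s + e a + e b`,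
where `a` and `b` are its two boundary positions and `B_6 = 10`. A boundary between two full
blocks is counted twice, which costs `2` per block, while `e 0 = e v = 0`; this gives `12m + Δ`.
-/

open Finset

structure IsSparseIndicator (e : ℕ → ℤ) : Prop where
  eq_zero_or_eq_one : ∀ j, e j = 0 ∨ e j = 1
  mul_succ_eq_zero : ∀ j, e j * e (j + 1) = 0

theorem IsSparseIndicator.le_one {e : ℕ → ℤ} (he : IsSparseIndicator e) (j : ℕ) :
    e j ≤ 1 := by
  rcases he.eq_zero_or_eq_one j with h | h <;> simp [h]

theorem IsSparseIndicator.shift {e : ℕ → ℤ} (he : IsSparseIndicator e) (c : ℕ) :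
    IsSparseIndicator fun j => e (c + j) :=
  ⟨fun j => he.eq_zero_or_eq_one (c + j), fun j => he.mul_succ_eq_zero (c + j)⟩

/-- Dynamic programming for `max ∑_{j ≤ J} w j * e j` over sparse indicators `e`: the two
components are the maxima under `e J = 0` and under `e J = 1`. -/
def sparseMax (w : ℕ → ℤ) : ℕ → ℤ × ℤ
  | 0 => (0, w 0)
  | J + 1 => (max (sparseMax w J).1 (sparseMax w J).2, (sparseMax w J).1 + w (J + 1))

theorem IsSparseIndicator.sum_mul_le_sparseMax' {e : ℕ → ℤ} (he : IsSparseIndicator e)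
    (w : ℕ → ℤ) (J : ℕ) :
    (e J = 0 → ∑ j ∈ range (J + 1), w j * e j ≤ (sparseMax w J).1) ∧
      (e J = 1 → ∑ j ∈ range (J + 1), w j * e j ≤ (sparseMax w J).2) := by
  induction J with
  | zero => constructor <;> intro h <;> simp [sparseMax, h]
  | succ J ih =>
    rw [sum_range_succ]
    constructor
    · intro h
      rw [h, mul_zero, add_zero]
      rcases he.eq_zero_or_eq_one J with hJ | hJ
      · exact (ih.1 hJ).trans (le_max_left _ _)
      · exact (ih.2 hJ).trans (le_max_right _ _)
    · intro h
      have hJ : e J = 0 := by simpa [h] using he.mul_succ_eq_zero J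
      rw [h, mul_one]
      exact add_le_add_left (ih.1 hJ) _

theorem IsSparseIndicator.sum_mul_le_sparseMax {e : ℕ → ℤ} (he : IsSparseIndicator e)
    (w : ℕ → ℤ) (J : ℕ) :
    ∑ j ∈ range (J + 1), w j * e j ≤ max (sparseMax w J).1 (sparseMax w J).2 := by
  rcases he.eq_zero_or_eq_one J with h | h
  · exact ((he.sum_mul_le_sparseMax' w J).1 h).trans (le_max_left _ _)
  · exact ((he.sum_mul_le_sparseMax' w J).2 h).trans (le_max_right _ _)


def signChoices : ℕ → List (ℕ → ℤ)
  | 0 => [0]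
  | s + 1 => (signChoices s).flatMap fun σ => [1, -1].map fun c l => if l = s then c else σ l

theorem exists_mem_signChoices_sum_abs_eq (x : ℕ → ℤ) (s : ℕ) :
    ∃ σ ∈ signChoices s, ∑ l ∈ range s, |x l| = ∑ l ∈ range s, σ l * x l := by
  induction s with
  | zero => exact ⟨0, by simp [signChoices]⟩
  | succ s ih =>
    obtain ⟨σ, hσ, hsum⟩ := ih
    obtain ⟨c, hc, habs⟩ : ∃ c ∈ [(1 : ℤ), -1], |x s| = c * x s := by
      rcases le_or_gt 0 (x s) with hx | hx
      · exact ⟨1, by simp, by rw [abs_of_nonneg hx, one_mul]⟩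
      · exact ⟨-1, by simp, by rw [abs_of_neg hx, neg_one_mul]⟩
    refine ⟨fun l => if l = s then c else σ l,
      List.mem_flatMap.2 ⟨σ, hσ, List.mem_map.2 ⟨c, hc, rfl⟩⟩, ?_⟩
    rw [sum_range_succ, sum_range_succ, hsum, habs]
    simp only [if_true]
    congr 1
    exact sum_congr rfl fun l hl => by rw [if_neg (mem_range.1 hl).ne]


def jump (e : ℕ → ℤ) (a : ℕ) : ℤ := e a - e (a - 1)

/-- For a swap indicator `e`, `π x = x + jump e x`; so when `p` lists the companion sets
`{p (4i), p (4i+1)}` and `{p (4i+2), p (4i+3)}` with equal sums, `drift p e i` is their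
discrepancy under `π`. -/
def drift (p : ℕ → ℕ) (e : ℕ → ℤ) (i : ℕ) : ℤ :=
  jump e (p (4 * i)) + jump e (p (4 * i + 1)) - (jump e (p (4 * i + 2)) + jump e (p (4 * i + 3)))

theorem jump_add {e : ℕ → ℤ} (c : ℕ) {a : ℕ} (ha : 1 ≤ a) :
    jump e (c + a) = jump (fun j => e (c + j)) a := by
  simp only [jump, Nat.add_sub_assoc ha]

def jumpCoeff (a j : ℕ) : ℤ := (if j = a then 1 else 0) - (if j = a - 1 then 1 else 0)

theorem jump_eq_sum (e : ℕ → ℤ) {a N : ℕ} (ha : a ≤ N) :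
    jump e a = ∑ j ∈ range (N + 1), jumpCoeff a j * e j := by
  simp only [jump, jumpCoeff, sub_mul, ite_mul, one_mul, zero_mul, sum_sub_distrib, sum_ite_eq',
    mem_range]
  rw [if_pos (by omega), if_pos (by omega)]

def driftCoeff (p : ℕ → ℕ) (l j : ℕ) : ℤ :=
  jumpCoeff (p (4 * l)) j + jumpCoeff (p (4 * l + 1)) j
    - (jumpCoeff (p (4 * l + 2)) j + jumpCoeff (p (4 * l + 3)) j)

def driftWeight (p : ℕ → ℕ) (σ : ℕ → ℤ) (s j : ℕ) : ℤ :=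
  ∑ l ∈ range s, σ l * driftCoeff p l j

theorem drift_eq_sum {p : ℕ → ℕ} {N l : ℕ} (hp : ∀ q < 4, p (4 * l + q) ≤ N)
    (e : ℕ → ℤ) :
    drift p e l = ∑ j ∈ range (N + 1), driftCoeff p l j * e j := by
  have h0 := hp 0 (by norm_num)
  rw [add_zero] at h0
  simp only [drift, driftCoeff, jump_eq_sum e h0, jump_eq_sum e (hp 1 (by norm_num)),
    jump_eq_sum e (hp 2 (by norm_num)), jump_eq_sum e (hp 3 (by norm_num)), ← sum_add_distrib,
    ← sum_sub_distrib, add_mul, sub_mul]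

theorem sum_mul_drift_eq_sum {p : ℕ → ℕ} {s : ℕ} (hp : ∀ k < 4 * s, p k ≤ 4 * s)
    (σ e : ℕ → ℤ) :
    ∑ l ∈ range s, σ l * drift p e l
      = ∑ j ∈ range (4 * s + 1), driftWeight p σ s j * e j := by
  simp only [driftWeight, sum_mul, mul_assoc]
  rw [sum_comm]
  refine sum_congr rfl fun l hl => ?_
  rw [drift_eq_sum (fun q hq => hp _ (by simp at hl; omega)) e, mul_sum]

/-- The indicators of `0` and `4s` are subtracted because these two positions are shared with
the neighbouring blocks; `sum_abs_drift_le` pays for them with `e 0 + e (4s)`. -/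
def DriftCertificate (p : ℕ → ℕ) (s : ℕ) (B : ℤ) : Prop :=
  ∀ σ ∈ signChoices s,
    let w := fun j =>
      driftWeight p σ s j - (if j = 0 then 1 else 0) - (if j = 4 * s then 1 else 0)
    max (sparseMax w (4 * s)).1 (sparseMax w (4 * s)).2 ≤ B

instance (p : ℕ → ℕ) (s : ℕ) (B : ℤ) : Decidable (DriftCertificate p s B) := by
  unfold DriftCertificate; infer_instance

theorem sum_abs_drift_le {p : ℕ → ℕ} {s : ℕ} {B : ℤ} (hp : ∀ k < 4 * s, p k ≤ 4 * s)
    (hcert : DriftCertificate p s B) {e : ℕ → ℤ} (he : IsSparseIndicator e) :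
    ∑ l ∈ range s, |drift p e l| ≤ B + e 0 + e (4 * s) := by
  obtain ⟨σ, hσ, hsum⟩ := exists_mem_signChoices_sum_abs_eq (drift p e) s
  have hmax := (he.sum_mul_le_sparseMax _ (4 * s)).trans (hcert σ hσ)
  simp only [sub_mul, ite_mul, one_mul, zero_mul, sum_sub_distrib, sum_ite_eq', mem_range,
    if_pos (Nat.succ_pos _), if_pos (Nat.lt_succ_self _)] at hmax
  rw [hsum, sum_mul_drift_eq_sum hp]
  linarith


section SwapIndicator

variable {v : ℕ} {π : ℕ → ℕ}

def swapIndicator (v : ℕ) (π : ℕ → ℕ) (j : ℕ) : ℤ :=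
  if 1 ≤ j ∧ j + 1 ≤ v ∧ π j = j + 1 then 1 else 0

theorem swapIndicator_zero : swapIndicator v π 0 = 0 := by
  simp [swapIndicator]

theorem swapIndicator_self : swapIndicator v π v = 0 := by
  simp [swapIndicator]

theorem IsSwapCollection.isSparseIndicator (hπ : IsSwapCollection v 1 π) :
    IsSparseIndicator (swapIndicator v π) := by
  refine ⟨fun j => by unfold swapIndicator; split_ifs <;> simp, fun j => ?_⟩
  unfold swapIndicator
  split_ifs with h h'
  · have := hπ.2.1 j (mem_Icc.2 ⟨h.1, by omega⟩)
    rw [h.2.2, h'.2.2] at this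
    omega
  all_goals simp

theorem IsSwapCollection.apply_eq_add_jump (hπ : IsSwapCollection v 1 π) {x : ℕ}
    (hx : x ∈ Icc 1 v) : (π x : ℤ) = x + jump (swapIndicator v π) x := by
  obtain ⟨hmem, hinv, hmag⟩ := hπ
  have hx' := mem_Icc.1 hx
  have hπx := mem_Icc.1 (hmem x hx)
  have hclose : π x ≤ x + 1 ∧ x ≤ π x + 1 := by
    have := abs_le.1 (hmag x hx)
    push_cast at this
    omega
  have hcur : swapIndicator v π x = if π x = x + 1 then 1 else 0 := by
    by_cases h : π x = x + 1
    · simp [swapIndicator, h]; omega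
    · simp [swapIndicator, h]
  have hprev : swapIndicator v π (x - 1) = if π x + 1 = x then 1 else 0 := by
    unfold swapIndicator
    by_cases h : π x + 1 = x
    · have hback : π (x - 1) = x - 1 + 1 := by rw [show x - 1 = π x by omega, hinv x hx]; omega
      rw [if_pos h, if_pos ⟨by omega, by omega, hback⟩]
    · rw [if_neg h, if_neg]
      rintro ⟨h1, -, h3⟩
      have := hinv (x - 1) (mem_Icc.2 ⟨h1, by omega⟩)
      rw [h3, Nat.sub_add_cancel hx'.1] at this
      omega
  simp only [jump, hcur, hprev]
  split_ifs <;> omega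

end SwapIndicator

section ConsecutivePairs

variable {f : ℕ → ℕ} {t : ℕ}

def consecutivePairs (f : ℕ → ℕ) (j : ℕ) : Finset ℕ := {f (2 * j - 2), f (2 * j - 1)}

theorem mem_consecutivePairs {j x : ℕ} :
    x ∈ consecutivePairs f j ↔ x = f (2 * j - 2) ∨ x = f (2 * j - 1) := by
  simp [consecutivePairs]

theorem consecutivePairs_two_mul_add_one_sub_one (f : ℕ → ℕ) (i : ℕ) :
    consecutivePairs f (2 * (i + 1) - 1) = {f (4 * i), f (4 * i + 1)} := by
  simp only [consecutivePairs]
  rw [show 2 * (2 * (i + 1) - 1) - 2 = 4 * i by omega,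
    show 2 * (2 * (i + 1) - 1) - 1 = 4 * i + 1 by omega]

theorem consecutivePairs_two_mul_add_one (f : ℕ → ℕ) (i : ℕ) :
    consecutivePairs f (2 * (i + 1)) = {f (4 * i + 2), f (4 * i + 3)} := by
  simp only [consecutivePairs]
  rw [show 2 * (2 * (i + 1)) - 2 = 4 * i + 2 by omega,
    show 2 * (2 * (i + 1)) - 1 = 4 * i + 3 by omega]

theorem sum_Icc_one_eq_sum_range {M : Type*} [AddCommMonoid M] (g : ℕ → M) (n : ℕ) :
    ∑ i ∈ Icc 1 n, g i = ∑ i ∈ range n, g (i + 1) := by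
  rw [← Ico_add_one_right_eq_Icc, sum_Ico_eq_sum_range]
  simp [add_comm]

theorem isBalancedCompanionFamily_consecutivePairs
    (hf : Set.BijOn f (Set.Iio (4 * (t + 1))) (Set.Icc 1 (4 * (t + 1))))
    (hsum : ∀ i < t + 1, f (4 * i) + f (4 * i + 1) = f (4 * i + 2) + f (4 * i + 3)) :
    IsBalancedCompanionFamily t (consecutivePairs f) := by
  have hinj {a b : ℕ} (ha : a < 4 * (t + 1)) (hb : b < 4 * (t + 1)) (h : f a = f b) : a = b :=
    hf.injOn ha hb h
  have hsub : ∀ j ∈ Icc 1 (2 * t + 2), consecutivePairs f j ⊆ Icc 1 (4 * (t + 1)) := by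
    intro j hj x hx
    rw [mem_Icc] at hj
    have hmaps {a : ℕ} (ha : a < 4 * (t + 1)) : f a ∈ Icc 1 (4 * (t + 1)) := by
      simpa using hf.mapsTo (Set.mem_Iio.2 ha)
    rcases mem_consecutivePairs.1 hx with rfl | rfl <;> exact hmaps (by omega)
  refine ⟨fun j hj => ⟨hsub j hj, card_pair fun h => ?_⟩, fun j hj j' hj' hne => ?_, ?_, ?_⟩
  · rw [mem_Icc] at hj
    have := hinj (by omega) (by omega) h
    omega
  · rw [mem_Icc] at hj hj'
    refine disjoint_left.2 fun x hx hx' => ?_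
    rcases mem_consecutivePairs.1 hx with rfl | rfl <;>
      rcases mem_consecutivePairs.1 hx' with h | h <;>
      · have := hinj (by omega) (by omega) h
        omega
  · refine (biUnion_subset.2 hsub).antisymm fun x hx => ?_
    obtain ⟨a, ha, rfl⟩ := hf.surjOn (Set.mem_Icc.2 (mem_Icc.1 hx))
    rw [Set.mem_Iio] at ha
    refine mem_biUnion.2
      ⟨a / 2 + 1, mem_Icc.2 ⟨by omega, by omega⟩, mem_consecutivePairs.2 ?_⟩
    rcases Nat.even_or_odd' a with ⟨k, rfl | rfl⟩
    · left; congr 1; omega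
    · right; congr 1; omega
  · intro i hi
    obtain ⟨i, rfl⟩ : ∃ i', i = i' + 1 := ⟨i - 1, by simp at hi; omega⟩
    have hi : i < t + 1 := by simp at hi; omega
    rw [consecutivePairs_two_mul_add_one_sub_one, consecutivePairs_two_mul_add_one,
      sum_pair fun h => by have := hinj (by omega) (by omega) h; omega,
      sum_pair fun h => by have := hinj (by omega) (by omega) h; omega]
    exact hsum i hi

theorem totalSetDiscrepancy_consecutivePairs {π : ℕ → ℕ}
    (hf : Set.BijOn f (Set.Iio (4 * (t + 1))) (Set.Icc 1 (4 * (t + 1))))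
    (hsum : ∀ i < t + 1, f (4 * i) + f (4 * i + 1) = f (4 * i + 2) + f (4 * i + 3))
    (hπ : IsSwapCollection (4 * (t + 1)) 1 π) :
    totalSetDiscrepancy t (consecutivePairs f) π
      = ∑ i ∈ range (t + 1), |drift f (swapIndicator (4 * (t + 1)) π) i| := by
  rw [totalSetDiscrepancy, sum_Icc_one_eq_sum_range]
  refine sum_congr rfl fun i hi => ?_
  rw [mem_range] at hi
  have hne {a : ℕ} (ha : a + 1 < 4 * (t + 1)) : f a ≠ f (a + 1) := fun h => by
    have := hf.injOn (Set.mem_Iio.2 (by omega)) (Set.mem_Iio.2 ha) h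
    omega
  have happly {a : ℕ} (ha : a < 4 * (t + 1)) := hπ.apply_eq_add_jump
    (by simpa using hf.mapsTo (Set.mem_Iio.2 ha))
  rw [consecutivePairs_two_mul_add_one_sub_one, consecutivePairs_two_mul_add_one,
    sum_pair (hne (by omega)), sum_pair (hne (by omega)), happly (a := 4 * i) (by omega),
    happly (a := 4 * i + 1) (by omega), happly (a := 4 * i + 2) (by omega),
    happly (a := 4 * i + 3) (by omega), drift]
  have hsumℤ : (f (4 * i) + f (4 * i + 1) : ℤ) = f (4 * i + 2) + f (4 * i + 3) := by
    exact_mod_cast hsum i hi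
  congr 1
  linear_combination hsumℤ

end ConsecutivePairs

section Gadgets

theorem List.bijOn_getD_of_perm_range' {l : List ℕ} {n : ℕ} (h : l.Perm (List.range' 1 n)) :
    Set.BijOn (fun k => l.getD k 0) (Set.Iio n) (Set.Icc 1 n) := by
  have hlen : l.length = n := by simpa using h.length_eq
  have hmem {x : ℕ} : x ∈ l ↔ x ∈ Set.Icc 1 n := by
    rw [h.mem_iff, List.mem_range'_1, Set.mem_Icc]
    omega
  have hget {k : ℕ} (hk : k ∈ Set.Iio n) : l.getD k 0 = l[k]'(hlen ▸ hk) :=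
    List.getD_eq_getElem _ _ _
  refine ⟨fun k hk => ?_, fun k hk k' hk' hkk' => ?_, fun x hx => ?_⟩
  · simp only [hget hk, ← hmem]
    exact List.getElem_mem _
  · simp only [hget hk, hget hk'] at hkk'
    exact ((h.nodup_iff.2 List.nodup_range').getElem_inj_iff).1 hkk'
  · obtain ⟨k, hk, rfl⟩ := List.mem_iff_getElem.1 (hmem.2 hx)
    exact ⟨k, hlen ▸ hk, List.getD_eq_getElem _ _ _⟩

/-- `gadget s` lists `1, …, 4s`; its `l`-th quadruple `a, a', b, b'` gives the companion sets
`{a, a'}` and `{b, b'}`. -/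
def gadget : ℕ → List ℕ
  | 1 => [1, 4, 2, 3]
  | 2 => [1, 8, 3, 6, 2, 7, 4, 5]
  | 3 => [1, 6, 3, 4, 2, 11, 5, 8, 7, 12, 9, 10]
  | 4 => [1, 16, 8, 9, 3, 14, 6, 11, 2, 7, 4, 5, 10, 15, 12, 13]
  | 5 => [7, 14, 1, 20, 11, 12, 4, 19, 13, 18, 15, 16, 5, 6, 3, 8, 9, 10, 2, 17]
  | 6 => [7, 20, 10, 17, 1, 24, 12, 13, 3, 8, 5, 6, 4, 9, 2, 11, 15, 22, 18, 19, 14, 23, 16, 21]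
  | _ => []

def gadgetEntry (s k : ℕ) : ℕ := (gadget s).getD k 0

def gadgetBound : ℕ → ℤ
  | 1 => 2 | 2 => 4 | 3 => 6 | 4 => 6 | 5 => 8 | 6 => 10 | _ => 0

variable {s : ℕ}

theorem gadget_perm (hs : s ≤ 6) : (gadget s).Perm (List.range' 1 (4 * s)) := by
  interval_cases s <;> decide

theorem bijOn_gadgetEntry (hs : s ≤ 6) :
    Set.BijOn (gadgetEntry s) (Set.Iio (4 * s)) (Set.Icc 1 (4 * s)) :=
  List.bijOn_getD_of_perm_range' (gadget_perm hs)

theorem gadgetEntry_mem {k : ℕ} (hs : s ≤ 6) (hk : k < 4 * s) :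
    gadgetEntry s k ∈ Set.Icc 1 (4 * s) :=
  (bijOn_gadgetEntry hs).mapsTo hk

theorem gadgetEntry_sum_eq (hs : s ≤ 6) {l : ℕ} (hl : l < s) :
    gadgetEntry s (4 * l) + gadgetEntry s (4 * l + 1)
      = gadgetEntry s (4 * l + 2) + gadgetEntry s (4 * l + 3) := by
  revert l
  interval_cases s <;> decide

set_option maxRecDepth 4000 in
theorem driftCertificate_gadgetEntry (hs : s ≤ 6) :
    DriftCertificate (gadgetEntry s) s (gadgetBound s) := by
  interval_cases s <;> decide

end Gadgets

section Concatenation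

theorem sum_range_mul_add {M : Type*} [AddCommMonoid M] (X : ℕ → M) (k m r : ℕ) :
    ∑ i ∈ range (k * m + r), X i
      = ∑ b ∈ range m, ∑ l ∈ range k, X (k * b + l) + ∑ l ∈ range r, X (k * m + l) := by
  rw [sum_range_add]
  congr 1
  induction m with
  | zero => simp
  | succ m ih => rw [mul_add, mul_one, sum_range_add, ih, sum_range_succ]

theorem sum_range_le_of_le_add_add {E Y : ℕ → ℤ} {B : ℤ} (hE : ∀ j, E j ≤ 1) {m : ℕ}
    (hm : 1 ≤ m) (hY : ∀ b < m, Y b ≤ B + E b + E (b + 1)) :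
    ∑ b ∈ range m, Y b ≤ (B + 2) * m - 2 + E 0 + E m := by
  induction m, hm using Nat.le_induction with
  | base => simpa using hY 0 one_pos
  | succ m hm ih =>
    have := ih fun b hb => hY b (by omega)
    have := hY m (by omega)
    have := hE m
    rw [sum_range_succ]
    push_cast
    linarith

variable {n : ℕ}

def blockSize (n b : ℕ) : ℕ := if b < n / 6 then 6 else n % 6

/-- Slot `k` of `⌊n/6⌋` copies of `gadget 6` followed by one copy of `gadget (n % 6)`, the
block containing slot `k` shifted by `24 * (k / 24)`. -/
def concatEntry (n k : ℕ) : ℕ := 24 * (k / 24) + gadgetEntry (blockSize n (k / 24)) (k % 24)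

theorem blockSize_le_six (n b : ℕ) : blockSize n b ≤ 6 := by
  unfold blockSize; split_ifs <;> omega

theorem mod_lt_blockSize {k : ℕ} (hk : k < 4 * n) : k % 24 < 4 * blockSize n (k / 24) := by
  unfold blockSize; split_ifs <;> omega

theorem add_blockSize_le {k : ℕ} (hk : k < 4 * n) :
    24 * (k / 24) + 4 * blockSize n (k / 24) ≤ 4 * n := by
  unfold blockSize; split_ifs <;> omega

theorem mod_six_lt_blockSize {i : ℕ} (hi : i < n) : i % 6 < blockSize n (i / 6) := by
  unfold blockSize; split_ifs <;> omega

theorem bijOn_concatEntry : Set.BijOn (concatEntry n) (Set.Iio (4 * n)) (Set.Icc 1 (4 * n)) := by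
  have hentry {k : ℕ} (hk : k < 4 * n) :=
    gadgetEntry_mem (blockSize_le_six n (k / 24)) (mod_lt_blockSize hk)
  refine ⟨fun k hk => ?_, fun k hk k' hk' h => ?_, fun x hx => ?_⟩
  · have := hentry hk
    have := add_blockSize_le hk
    simp only [concatEntry, Set.mem_Icc] at *
    omega
  · have hb : k / 24 = k' / 24 := by
      have := hentry hk
      have := hentry hk'
      have := blockSize_le_six n (k / 24)
      have := blockSize_le_six n (k' / 24)
      simp only [concatEntry, Set.mem_Icc] at *
      omega
    have hq : k % 24 = k' % 24 :=
      (bijOn_gadgetEntry (blockSize_le_six n (k / 24))).injOn (mod_lt_blockSize hk)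
        (hb ▸ mod_lt_blockSize hk') (by simpa [concatEntry, hb] using h)
    omega
  · obtain ⟨hx1, hx2⟩ := hx
    have hk : x - 1 < 4 * n := by omega
    have hs := blockSize_le_six n ((x - 1) / 24)
    obtain ⟨q, hq, hqx⟩ := (bijOn_gadgetEntry hs).surjOn
      (show (x - 1) % 24 + 1 ∈ Set.Icc 1 (4 * blockSize n ((x - 1) / 24)) from
        ⟨by omega, mod_lt_blockSize hk⟩)
    have hq : q < 4 * blockSize n ((x - 1) / 24) := hq
    have := add_blockSize_le hk
    refine ⟨24 * ((x - 1) / 24) + q, Set.mem_Iio.2 (by omega), ?_⟩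
    simp only [concatEntry, show (24 * ((x - 1) / 24) + q) / 24 = (x - 1) / 24 by omega,
      show (24 * ((x - 1) / 24) + q) % 24 = q by omega, hqx]
    omega

theorem concatEntry_four_mul_add {i q : ℕ} (hq : q < 4) :
    concatEntry n (4 * i + q)
      = 24 * (i / 6) + gadgetEntry (blockSize n (i / 6)) (4 * (i % 6) + q) := by
  rw [concatEntry, show (4 * i + q) / 24 = i / 6 by omega,
    show (4 * i + q) % 24 = 4 * (i % 6) + q by omega]

theorem concatEntry_four_mul {i : ℕ} :
    concatEntry n (4 * i) = 24 * (i / 6) + gadgetEntry (blockSize n (i / 6)) (4 * (i % 6)) :=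
  concatEntry_four_mul_add (q := 0) (by norm_num)

theorem concatEntry_sum_eq {i : ℕ} (hi : i < n) :
    concatEntry n (4 * i) + concatEntry n (4 * i + 1)
      = concatEntry n (4 * i + 2) + concatEntry n (4 * i + 3) := by
  have := gadgetEntry_sum_eq (blockSize_le_six n (i / 6)) (mod_six_lt_blockSize hi)
  rw [concatEntry_four_mul, concatEntry_four_mul_add (by norm_num),
    concatEntry_four_mul_add (by norm_num), concatEntry_four_mul_add (by norm_num)]
  omega

theorem drift_concatEntry (e : ℕ → ℤ) {i : ℕ} (hi : i < n) :
    drift (concatEntry n) e i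
      = drift (gadgetEntry (blockSize n (i / 6))) (fun j => e (24 * (i / 6) + j)) (i % 6) := by
  have hpos {q : ℕ} (hq : q < 4) : 1 ≤ gadgetEntry (blockSize n (i / 6)) (4 * (i % 6) + q) :=
    (gadgetEntry_mem (blockSize_le_six _ _) (by have := mod_six_lt_blockSize hi; omega)).1
  have hpos0 := hpos (q := 0) (by norm_num)
  rw [add_zero] at hpos0
  simp only [drift, concatEntry_four_mul, concatEntry_four_mul_add (n := n) (by norm_num : 1 < 4),
    concatEntry_four_mul_add (n := n) (by norm_num : 2 < 4),
    concatEntry_four_mul_add (n := n) (by norm_num : 3 < 4), jump_add _ hpos0,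
    jump_add _ (hpos (by norm_num : 1 < 4)), jump_add _ (hpos (by norm_num : 2 < 4)),
    jump_add _ (hpos (by norm_num : 3 < 4))]

theorem sum_abs_drift_concatEntry_le {e : ℕ → ℤ} (he : IsSparseIndicator e) {b : ℕ}
    (hb : b ≤ n / 6) :
    ∑ l ∈ range (blockSize n b), |drift (concatEntry n) e (6 * b + l)|
      ≤ gadgetBound (blockSize n b) + e (24 * b) + e (24 * b + 4 * blockSize n b) := by
  have hs := blockSize_le_six n b
  calc _ = ∑ l ∈ range (blockSize n b),
        |drift (gadgetEntry (blockSize n b)) (fun j => e (24 * b + j)) l| := by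
        refine sum_congr rfl fun l hl => ?_
        have hl : l < blockSize n b := mem_range.1 hl
        have hi : 6 * b + l < n := by unfold blockSize at hl; split_ifs at hl <;> omega
        rw [drift_concatEntry e hi, show (6 * b + l) / 6 = b by omega,
          show (6 * b + l) % 6 = l by omega]
    _ ≤ _ := by
        simpa using sum_abs_drift_le (fun k hk => (gadgetEntry_mem hs hk).2)
          (driftCertificate_gadgetEntry hs) (he.shift (24 * b))

theorem sum_abs_drift_concatEntry_full_block_le {e : ℕ → ℤ} (he : IsSparseIndicator e)
    {b : ℕ} (hb : b < n / 6) :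
    ∑ l ∈ range 6, |drift (concatEntry n) e (6 * b + l)|
      ≤ 10 + e (24 * b) + e (24 * (b + 1)) := by
  simpa [blockSize, hb, mul_add, gadgetBound] using sum_abs_drift_concatEntry_le he hb.le

theorem sum_abs_drift_concatEntry_last_block_le {e : ℕ → ℤ} (he : IsSparseIndicator e)
    (hev : e (4 * n) = 0) :
    ∑ l ∈ range (n % 6), |drift (concatEntry n) e (6 * (n / 6) + l)|
      ≤ gadgetBound (n % 6) + e (24 * (n / 6)) := by
  have h := sum_abs_drift_concatEntry_le he (le_refl (n / 6))
  rwa [blockSize, if_neg (lt_irrefl _), show 24 * (n / 6) + 4 * (n % 6) = 4 * n by omega, hev,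
    add_zero] at h

def discrepancyExcess (r : ℕ) : ℤ := if r = 0 then -2 else gadgetBound r

theorem sum_abs_drift_concatEntry_le_excess (hn : 0 < n) {e : ℕ → ℤ}
    (he : IsSparseIndicator e) (he0 : e 0 = 0) (hev : e (4 * n) = 0) :
    ∑ i ∈ range n, |drift (concatEntry n) e i|
      ≤ 12 * ((n / 6 : ℕ) : ℤ) + discrepancyExcess (n % 6) := by
  have hsplit := sum_range_mul_add (fun i => |drift (concatEntry n) e i|) 6 (n / 6) (n % 6)
  rw [Nat.div_add_mod] at hsplit
  have hlast := sum_abs_drift_concatEntry_last_block_le he hev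
  rw [hsplit]
  rcases Nat.eq_zero_or_pos (n / 6) with hm | hm
  · have hr : n % 6 ≠ 0 := by omega
    simp only [hm, mul_zero, range_zero, sum_empty, zero_add, he0] at hlast ⊢
    simpa [discrepancyExcess, hr] using hlast
  · have hchain := sum_range_le_of_le_add_add (E := fun b => e (24 * b)) (fun j => he.le_one _)
      hm fun b => sum_abs_drift_concatEntry_full_block_le he
    simp only [mul_zero, he0] at hchain
    by_cases hr : n % 6 = 0
    · have hend : e (24 * (n / 6)) = 0 := by rw [show 24 * (n / 6) = 4 * n by omega, hev]
      simp only [hr, hend, gadgetBound, discrepancyExcess] at hchain hlast ⊢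
      push_cast at hchain ⊢
      linarith
    · have := he.le_one (24 * (n / 6))
      simp only [discrepancyExcess, hr, if_false]
      push_cast at hchain ⊢
      linarith

end Concatenation

theorem concatenated_family_discrepancy_p1_general (t : ℕ) (Δ : ℤ)
    (hΔ : (4*(t+1) - 24*((t+1)/6) = 0 ∧ Δ = -2) ∨
          (4*(t+1) - 24*((t+1)/6) = 4 ∧ Δ = 2) ∨
          (4*(t+1) - 24*((t+1)/6) = 8 ∧ Δ = 4) ∨
          (4*(t+1) - 24*((t+1)/6) = 12 ∧ Δ = 6) ∨
          (4*(t+1) - 24*((t+1)/6) = 16 ∧ Δ = 6) ∨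
          (4*(t+1) - 24*((t+1)/6) = 20 ∧ Δ = 8)) :
    ∃ S : ℕ → Finset ℕ, IsBalancedCompanionFamily t S ∧
      ∀ π : ℕ → ℕ, IsSwapCollection (4*(t+1)) 1 π →
        totalSetDiscrepancy t S π ≤ 12 * (((t+1)/6 : ℕ) : ℤ) + Δ := by
  have hΔ' : discrepancyExcess ((t + 1) % 6) = Δ := by
    rcases hΔ with ⟨h, rfl⟩ | ⟨h, rfl⟩ | ⟨h, rfl⟩ | ⟨h, rfl⟩ | ⟨h, rfl⟩ | ⟨h, rfl⟩ <;>
      rw [show (t + 1) % 6 = (4 * (t + 1) - 24 * ((t + 1) / 6)) / 4 by omega, h] <;> rfl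
  refine ⟨consecutivePairs (concatEntry (t + 1)),
    isBalancedCompanionFamily_consecutivePairs bijOn_concatEntry fun _ => concatEntry_sum_eq,
    fun π hπ => ?_⟩
  rw [totalSetDiscrepancy_consecutivePairs bijOn_concatEntry (fun _ => concatEntry_sum_eq) hπ,
    ← hΔ']
  exact sum_abs_drift_concatEntry_le_excess t.succ_pos hπ.isSparseIndicator swapIndicator_zero
    swapIndicator_self

/-- Let `t + 1 ≥ 3`, `v = 4(t+1)`, `m = ⌊(t+1)/6⌋`, `m' = v − 24m`. Then there is a
balanced companion family on `{1,…,v}` whose worst-case total set discrepancy under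
magnitude-1 swaps is at most `12m + Δ`, where `Δ = −2, 2, 4, 6, 6, 8` according as
`m' = 0, 4, 8, 12, 16, 20`. -/
theorem concatenated_family_discrepancy_p1 (t : ℕ) (ht : 3 ≤ t + 1) (Δ : ℤ)
    (hΔ : (4*(t+1) - 24*((t+1)/6) = 0 ∧ Δ = -2) ∨
          (4*(t+1) - 24*((t+1)/6) = 4 ∧ Δ = 2) ∨
          (4*(t+1) - 24*((t+1)/6) = 8 ∧ Δ = 4) ∨
          (4*(t+1) - 24*((t+1)/6) = 12 ∧ Δ = 6) ∨
          (4*(t+1) - 24*((t+1)/6) = 16 ∧ Δ = 6) ∨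
          (4*(t+1) - 24*((t+1)/6) = 20 ∧ Δ = 8)) :
    ∃ S : ℕ → Finset ℕ, IsBalancedCompanionFamily t S ∧
      ∀ π : ℕ → ℕ, IsSwapCollection (4*(t+1)) 1 π →
        totalSetDiscrepancy t S π ≤ 12 * (((t+1)/6 : ℕ) : ℤ) + Δ :=
  concatenated_family_discrepancy_p1_general t Δ hΔ
end
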